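/- arXiv:1911.12649 — 9 statements merged into one kernel-verified Lean document; each statement's English description precedes it below -/
import Mathlib

section
/- For every integer n ≥ 1, Π·𝔦 = 𝔦·Π as subsets of Matₙ(R); this common set is the two-sided ideal of 𝔦 consisting of all matrices in 𝔦 whose entries on or below the diagonal lie in 𝔪, and it equals the Jacobson radical of the ring 𝔦 (the intersection of all maximal left ideals of 𝔦). -/
open IsLocalRing

variable (R : Type*) [CommRing R] [IsDomain R] [IsDiscreteValuationRing R]

/-- The Iwahori order `𝔦`: the subring of `Matₙ(R)` consisting of matrices whose entries
strictly below the diagonal lie in the maximal ideal `𝔪`. -/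
def iwahori (n : ℕ) : Subring (Matrix (Fin n) (Fin n) R) where
  carrier := {M | ∀ i j : Fin n, (j : ℕ) < (i : ℕ) → M i j ∈ maximalIdeal R}
  zero_mem' := by
    intro i j _
    simpa using (maximalIdeal R).zero_mem
  one_mem' := by
    intro i j h
    rw [Matrix.one_apply_ne (Fin.ne_of_val_ne h.ne')]
    exact (maximalIdeal R).zero_mem
  add_mem' := by
    intro A B hA hB i j h
    simpa [Matrix.add_apply] using add_mem (hA i j h) (hB i j h)
  neg_mem' := by
    intro A hA i j h
    simpa [Matrix.neg_apply] using neg_mem (hA i j h)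
  mul_mem' := by
    intro A B hA hB i j h
    rw [Matrix.mul_apply]
    refine Submodule.sum_mem _ fun l _ => ?_
    rcases lt_or_ge (j : ℕ) (l : ℕ) with hl | hl
    · exact Ideal.mul_mem_left _ _ (hB l j hl)
    · exact Ideal.mul_mem_right _ _ (hA i l (lt_of_le_of_lt hl h))

/-- The matrix `Π`, with `(i, i+1)`-entries `1`, `(n,1)`-entry `ϖ` and all other
entries `0`. -/
def PiMat (ϖ : R) (n : ℕ) : Matrix (Fin n) (Fin n) R :=
  Matrix.of fun i j => if (j : ℕ) = (i : ℕ) + 1 then 1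
    else if (i : ℕ) = n - 1 ∧ (j : ℕ) = 0 then ϖ else 0

/-!
Let `𝔓` be the set of matrices whose entries on and below the diagonal lie in `𝔪`. Left
multiplication by `Π` moves every row up by one and sends the first row, multiplied by `ϖ`, to
the bottom; as `𝔪 = (ϖ)` this gives `Π·𝔦 = 𝔓`. The anti-involution `M ↦ J Mᵀ J`, with `J` the
order-reversing permutation matrix, preserves `𝔦` and `𝔓` and fixes `Π`, so `𝔦·Π = 𝔓` as well.

Reducing a diagonal entry modulo `𝔪` is a ring map from `𝔦` onto the residue field, and its kernel
is a maximal left ideal; hence the Jacobson radical lies in `𝔓`. Conversely, for `s ∈ 𝔓` the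
power `sⁿ` has all its entries in `𝔪`, so `1 - sⁿ` is invertible in `𝔦`, and therefore so is
its factor `1 - s`; this puts `𝔓` inside the radical.
-/

def revTranspose {α : Type*} {n : ℕ} (M : Matrix (Fin n) (Fin n) α) : Matrix (Fin n) (Fin n) α :=
  M.transpose.submatrix Fin.rev Fin.rev

lemma revTranspose_revTranspose {α : Type*} {n : ℕ} (M : Matrix (Fin n) (Fin n) α) :
    revTranspose (revTranspose M) = M := by
  ext i j
  simp [revTranspose]

lemma revTranspose_mul {α : Type*} [CommSemiring α] {n : ℕ} (M N : Matrix (Fin n) (Fin n) α) :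
    revTranspose (M * N) = revTranspose N * revTranspose M := by
  rw [revTranspose, Matrix.transpose_mul]
  exact (Matrix.submatrix_mul_equiv _ _ _ Fin.revPerm _).symm

section LowerBand

variable {A : Type*} [CommRing A] (I : Ideal A) (n : ℕ)

/-- `𝔦 = lowerBand 𝔪 n 0` and `𝔓 = lowerBand 𝔪 n 1`. -/
def lowerBand (d : ℕ) : Set (Matrix (Fin n) (Fin n) A) :=
  {M | ∀ i j : Fin n, (j : ℕ) < i + d → M i j ∈ I}

variable {I n}

lemma lowerBand_antitone : Antitone (lowerBand I n) :=
  fun _ _ h _ hM i j hji => hM i j (by omega)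

lemma one_mem_lowerBand_zero : (1 : Matrix (Fin n) (Fin n) A) ∈ lowerBand I n 0 := by
  intro i j hji
  rw [Matrix.one_apply_ne (Fin.ne_of_val_ne hji.ne')]
  exact I.zero_mem

lemma mul_mem_lowerBand {d e : ℕ} {M N : Matrix (Fin n) (Fin n) A}
    (hM : M ∈ lowerBand I n d) (hN : N ∈ lowerBand I n e) : M * N ∈ lowerBand I n (d + e) := by
  intro i j hji
  rw [Matrix.mul_apply]
  refine Submodule.sum_mem _ fun k _ => ?_
  rcases lt_or_ge (k : ℕ) (i + d) with hk | hk
  · exact I.mul_mem_right _ (hM i k hk)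
  · exact I.mul_mem_left _ (hN k j (by omega))

lemma pow_mem_lowerBand {d : ℕ} {M : Matrix (Fin n) (Fin n) A} (hM : M ∈ lowerBand I n d) :
    ∀ k : ℕ, M ^ k ∈ lowerBand I n (k * d)
  | 0 => by simp [one_mem_lowerBand_zero]
  | k + 1 => by simpa [pow_succ, Nat.succ_mul] using mul_mem_lowerBand (pow_mem_lowerBand hM k) hM

lemma apply_mem_of_mem_lowerBand_self {M : Matrix (Fin n) (Fin n) A}
    (hM : M ∈ lowerBand I n n) (i j : Fin n) : M i j ∈ I :=
  hM i j (by omega)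

lemma revTranspose_mem_lowerBand {d : ℕ} {M : Matrix (Fin n) (Fin n) A}
    (hM : M ∈ lowerBand I n d) : revTranspose M ∈ lowerBand I n d := by
  intro i j hji
  exact hM j.rev i.rev (by simp only [Fin.val_rev]; omega)

end LowerBand

lemma isUnit_det_one_sub_of_forall_mem {A ι : Type*} [CommRing A] [IsLocalRing A] [Fintype ι]
    [DecidableEq ι] {M : Matrix ι ι A} (hM : ∀ i j, M i j ∈ maximalIdeal A) :
    IsUnit (1 - M).det := by
  have hres : (residue A).mapMatrix (1 - M) = 1 := by
    ext i j
    simp [Matrix.one_apply, (residue_eq_zero_iff _).mpr (hM i j)]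
  rw [← residue_ne_zero_iff_isUnit, RingHom.map_det, hres, Matrix.det_one]
  exact one_ne_zero

section PiMat

variable {A : Type*} [CommRing A]

lemma piMat_mul_apply (ϖ : A) {n : ℕ} (X : Matrix (Fin n) (Fin n) A) (i j : Fin n) :
    (PiMat A ϖ n * X) i j =
      if h : (i : ℕ) + 1 < n then X ⟨i + 1, h⟩ j else ϖ * X ⟨0, i.pos⟩ j := by
  rw [Matrix.mul_apply]
  split_ifs with h
  · rw [Finset.sum_eq_single ⟨i + 1, h⟩ (fun k _ hk => ?_) (by simp)]
    · simp [PiMat]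
    · have hk' : (k : ℕ) ≠ i + 1 := fun e => hk (Fin.ext e)
      simp [PiMat, hk', show (i : ℕ) ≠ n - 1 by omega]
  · rw [Finset.sum_eq_single ⟨0, i.pos⟩ (fun k _ hk => ?_) (by simp)]
    · simp [PiMat, show (i : ℕ) = n - 1 by omega]
    · have hk' : (k : ℕ) ≠ 0 := fun e => hk (Fin.ext e)
      simp [PiMat, hk', show (k : ℕ) ≠ i + 1 by omega]

lemma revTranspose_piMat (ϖ : A) (n : ℕ) : revTranspose (PiMat A ϖ n) = PiMat A ϖ n := by
  ext i j
  simp only [revTranspose, Matrix.submatrix_apply, Matrix.transpose_apply, PiMat, Matrix.of_apply,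
    Fin.val_rev]
  split_ifs <;> first | rfl | omega

end PiMat

variable {R}

lemma isUnit_one_sub_of_forall_mem {n : ℕ} {a : iwahori R n}
    (ha : ∀ i j, (a : Matrix (Fin n) (Fin n) R) i j ∈ maximalIdeal R) : IsUnit (1 - a) := by
  have hdet := isUnit_det_one_sub_of_forall_mem ha
  set C := (1 - (a : Matrix (Fin n) (Fin n) R))⁻¹
  have hC : C ∈ iwahori R n := by
    have hCeq : C = 1 + (a : Matrix (Fin n) (Fin n) R) * C := by
      rw [← sub_eq_iff_eq_add, ← one_sub_mul]
      exact Matrix.mul_nonsing_inv _ hdet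
    intro i j hji
    rw [hCeq, Matrix.add_apply, Matrix.one_apply_ne (Fin.ne_of_val_ne hji.ne'), zero_add,
      Matrix.mul_apply]
    exact Submodule.sum_mem _ fun k _ => Ideal.mul_mem_right _ _ (ha i k)
  exact isUnit_iff_exists.mpr ⟨⟨C, hC⟩, Subtype.ext (Matrix.mul_nonsing_inv _ hdet),
    Subtype.ext (Matrix.nonsing_inv_mul _ hdet)⟩

lemma isUnit_one_sub_of_mem_lowerBand_one {n : ℕ} {s : iwahori R n}
    (hs : (s : Matrix (Fin n) (Fin n) R) ∈ lowerBand (maximalIdeal R) n 1) :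
    IsUnit (1 - s) := by
  have hpow : IsUnit (1 - s ^ n) := isUnit_one_sub_of_forall_mem
    (apply_mem_of_mem_lowerBand_self (by simpa using pow_mem_lowerBand hs n))
  have hcomm : Commute (1 - s) (∑ i ∈ Finset.range n, s ^ i) :=
    (mul_neg_geom_sum s n).trans (geom_sum_mul_neg s n).symm
  exact (hcomm.isUnit_mul_iff.mp (by rwa [mul_neg_geom_sum])).1

noncomputable def diagResidue {n : ℕ} (i : Fin n) : iwahori R n →+* ResidueField R where
  toFun M := residue R ((M : Matrix (Fin n) (Fin n) R) i i)
  map_one' := by simp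
  map_mul' M N := by
    rw [Subring.coe_mul, Matrix.mul_apply, map_sum, Finset.sum_eq_single i, map_mul]
    · intro k _ hk
      rw [residue_eq_zero_iff]
      rcases lt_or_gt_of_ne hk with hk | hk
      · exact Ideal.mul_mem_right _ _ (M.2 i k hk)
      · exact Ideal.mul_mem_left _ _ (N.2 k i hk)
    · simp
  map_zero' := by simp
  map_add' M N := by simp

lemma diagResidue_surjective {n : ℕ} (i : Fin n) :
    Function.Surjective (diagResidue (R := R) i) := by
  intro r
  obtain ⟨a, rfl⟩ := residue_surjective r
  refine ⟨⟨Matrix.diagonal fun _ => a, fun p q hqp => ?_⟩, by simp [diagResidue]⟩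
  rw [Matrix.diagonal_apply_ne _ (Fin.ne_of_val_ne hqp.ne')]
  exact zero_mem _

theorem mem_jacobson_iwahori_iff {n : ℕ} {x : iwahori R n} :
    x ∈ Ring.jacobson (iwahori R n) ↔
      (x : Matrix (Fin n) (Fin n) R) ∈ lowerBand (maximalIdeal R) n 1 := by
  constructor
  · intro hx i j hji
    rcases (Nat.lt_succ_iff.mp hji).lt_or_eq with hlt | heq
    · exact x.2 i j hlt
    · have := RingHom.ker_isMaximal_of_surjective _ (diagResidue_surjective (R := R) i)
      have hker : x ∈ RingHom.ker (diagResidue i) := Ring.jacobson_le_of_isMaximal _ hx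
      rw [Fin.ext heq]
      exact (residue_eq_zero_iff _).mp (RingHom.mem_ker.mp hker)
  · intro hx
    rw [← Ideal.jacobson_bot, Ideal.mem_jacobson_iff]
    intro y
    obtain ⟨u, hu⟩ :=
      isUnit_one_sub_of_mem_lowerBand_one (s := -y * x) (mul_mem_lowerBand (-y).2 hx)
    refine ⟨↑u⁻¹, ?_⟩
    rw [Ideal.mem_bot, mul_assoc, ← mul_add_one, show y * x + 1 = 1 - -y * x by noncomm_ring,
      ← hu, Units.inv_mul, sub_self]

lemma revTranspose_mem_iwahori {n : ℕ} {M : Matrix (Fin n) (Fin n) R} (hM : M ∈ iwahori R n) :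
    revTranspose M ∈ iwahori R n :=
  revTranspose_mem_lowerBand (I := maximalIdeal R) (d := 0) hM

lemma piMat_mul_image {ϖ : R} (hϖ : Ideal.span {ϖ} = maximalIdeal R) (n : ℕ) :
    (PiMat R ϖ n * ·) '' (iwahori R n : Set (Matrix (Fin n) (Fin n) R)) =
      lowerBand (maximalIdeal R) n 1 := by
  have hϖm : ϖ ∈ maximalIdeal R := hϖ ▸ Ideal.mem_span_singleton_self ϖ
  ext M
  constructor
  · rintro ⟨X, hX, rfl⟩ i j hji
    dsimp only
    rw [piMat_mul_apply]
    split_ifs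
    · exact hX _ _ hji
    · exact Ideal.mul_mem_right _ _ hϖm
  · intro hM
    have hlast (j : Fin n) : ϖ ∣ M ⟨n - 1, by have := j.isLt; omega⟩ j := by
      rw [← Ideal.mem_span_singleton, hϖ]
      exact hM _ _ (by simp only; omega)
    choose c hc using hlast
    refine ⟨Matrix.of fun k j => if h : 0 < (k : ℕ) then M ⟨k - 1, by omega⟩ j else c j,
      fun k j hjk => ?_, ?_⟩
    · rw [Matrix.of_apply, dif_pos (by omega)]
      exact hM _ _ (by simp only; omega)
    · ext i j
      dsimp only
      rw [piMat_mul_apply]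
      split_ifs with h
      · simp
      · rw [Matrix.of_apply, dif_neg (lt_irrefl 0), ← hc j]
        congr
        omega

lemma mul_piMat_image {ϖ : R} (hϖ : Ideal.span {ϖ} = maximalIdeal R) (n : ℕ) :
    (· * PiMat R ϖ n) '' (iwahori R n : Set (Matrix (Fin n) (Fin n) R)) =
      lowerBand (maximalIdeal R) n 1 := by
  ext M
  constructor
  · rintro ⟨X, hX, rfl⟩
    dsimp only
    rw [← revTranspose_revTranspose (X * _), revTranspose_mul, revTranspose_piMat]
    apply revTranspose_mem_lowerBand
    rw [← piMat_mul_image hϖ]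
    exact ⟨_, revTranspose_mem_iwahori hX, rfl⟩
  · intro hM
    obtain ⟨X, hX, hXM⟩ : revTranspose M ∈ (PiMat R ϖ n * ·) '' (iwahori R n : Set _) := by
      rw [piMat_mul_image hϖ]
      exact revTranspose_mem_lowerBand hM
    refine ⟨revTranspose X, revTranspose_mem_iwahori hX, ?_⟩
    dsimp only at hXM ⊢
    rw [← revTranspose_piMat, ← revTranspose_mul, hXM, revTranspose_revTranspose]

variable (R)

theorem piMat_mul_iwahori (ϖ : R) (hϖ : Ideal.span {ϖ} = maximalIdeal R)
    (n : ℕ) :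
    ((fun x => PiMat R ϖ n * x) '' (iwahori R n : Set (Matrix (Fin n) (Fin n) R)) =
      (fun x => x * PiMat R ϖ n) '' (iwahori R n : Set (Matrix (Fin n) (Fin n) R))) ∧
    ((fun x => PiMat R ϖ n * x) '' (iwahori R n : Set (Matrix (Fin n) (Fin n) R)) =
      {M : Matrix (Fin n) (Fin n) R | M ∈ iwahori R n ∧
        ∀ i j : Fin n, (j : ℕ) ≤ (i : ℕ) → M i j ∈ maximalIdeal R}) ∧
    (∀ a ∈ iwahori R n,
      ∀ x ∈ (fun y => PiMat R ϖ n * y) '' (iwahori R n : Set (Matrix (Fin n) (Fin n) R)),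
        a * x ∈ (fun y => PiMat R ϖ n * y) '' (iwahori R n : Set (Matrix (Fin n) (Fin n) R)) ∧
        x * a ∈ (fun y => PiMat R ϖ n * y) '' (iwahori R n : Set (Matrix (Fin n) (Fin n) R))) ∧
    (∀ x : iwahori R n,
      x ∈ sInf {J : Ideal (iwahori R n) | J.IsMaximal} ↔
        (x : Matrix (Fin n) (Fin n) R) ∈
          (fun y => PiMat R ϖ n * y) '' (iwahori R n : Set (Matrix (Fin n) (Fin n) R))) := by
  have hleft := piMat_mul_image hϖ n
  have hband : lowerBand (maximalIdeal R) n 1 = {M : Matrix (Fin n) (Fin n) R |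
      M ∈ iwahori R n ∧ ∀ i j : Fin n, (j : ℕ) ≤ (i : ℕ) → M i j ∈ maximalIdeal R} :=
    Set.ext fun M =>
      ⟨fun h => ⟨lowerBand_antitone zero_le_one h, fun i j hji => h i j (Nat.lt_succ_of_le hji)⟩,
        fun h i j hji => h.2 i j (Nat.le_of_lt_succ hji)⟩
  refine ⟨hleft.trans (mul_piMat_image hϖ n).symm, hleft.trans hband, fun a ha x hx => ?_,
    fun x => ?_⟩
  · rw [hleft] at hx ⊢
    exact ⟨mul_mem_lowerBand ha hx, mul_mem_lowerBand (e := 0) hx ha⟩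
  · rw [← Ring.jacobson_eq_sInf_isMaximal, hleft]
    exact mem_jacobson_iwahori_iff
end

section
/- Let n ≥ 1 and g ∈ GLₙ(F). Then g·Matₙ(R)·g⁻¹ = Matₙ(R) (equality of subsets of Matₙ(F)) if and only if there exist m ∈ ℤ and u ∈ GLₙ(R) with g = ϖ^m·u. -/
/-!
If `g = ϖ^m u` with `u ∈ GLₙ(R)`, conjugation by `g` is conjugation by the unit `u` of
`Matₙ(R)`. Conversely, since a valuation ring orders `F` by divisibility, some entry `c = g k l`
divides all entries of `g`, so `c⁻¹ g` is integral; and `(g E_{li} g⁻¹) k j = c · g⁻¹ i j` shows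
that `c g⁻¹` is integral too. Hence `g ∈ F^× GLₙ(R)`, and `F^× = ϖ^ℤ R^×`.
-/

open IsLocalRing

theorem ValuationRing.exists_ne_zero_forall_isInteger_div
    {R F : Type*} [CommRing R] [IsDomain R] [ValuationRing R] [Field F] [Algebra R F]
    [IsFractionRing R F] {ι : Type*} [Finite ι] {x : ι → F} (hx : x ≠ 0) :
    ∃ k, x k ≠ 0 ∧ ∀ i, IsLocalization.IsInteger R (x i / x k) := by
  obtain ⟨i₀, hi₀⟩ := Function.ne_iff.mp hx
  have : Nonempty ι := ⟨i₀⟩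
  set v := ValuationRing.valuation R F
  obtain ⟨k, hk⟩ := Finite.exists_max (v ∘ x)
  have hxk : x k ≠ 0 := fun h => hi₀ <| v.zero_iff.mp <| le_zero_iff.mp <| by
    simpa [h] using hk i₀
  refine ⟨k, hxk, fun i => ?_⟩
  refine (ValuationRing.mem_integer_iff R F _).mp <| (v.mem_integer_iff _).mpr ?_
  rw [map_div₀]
  exact div_le_one_of_le₀ (hk i) zero_le

namespace Matrix

variable {R F n : Type*} [Fintype n] [DecidableEq n]

theorem mul_single_one_mul_apply {α : Type*} [Semiring α] (g h : Matrix n n α) (k l i j : n) :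
    (g * single k l (1 : α) * h : Matrix n n α) i j = g i k * h l j := by
  simp [mul_apply, single_apply, ite_and]

variable [CommRing R] [Field F] [Algebra R F]

theorem mem_range_mapMatrix_algebraMap_iff {a : Matrix n n F} :
    a ∈ (algebraMap R F).mapMatrix.range ↔ ∀ i j, IsLocalization.IsInteger R (a i j) := by
  constructor
  · rintro ⟨M, rfl⟩ i j
    exact ⟨M i j, rfl⟩
  · intro h
    choose r hr using h
    exact ⟨of r, ext hr⟩

theorem image_conj_range_mapMatrix_of_eq_smul {c : F} (hc : c ≠ 0) {u v : Matrix n n R}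
    (huv : u * v = 1) {g : GL n F}
    (hg : (g : Matrix n n F) = c • u.map (algebraMap R F)) :
    (fun a => (g : Matrix n n F) * a * ((g⁻¹ : GL n F) : Matrix n n F)) ''
      (((algebraMap R F).mapMatrix (m := n)).range : Set (Matrix n n F)) =
      ((algebraMap R F).mapMatrix (m := n)).range := by
  set f := (algebraMap R F).mapMatrix (m := n)
  replace hg : (g : Matrix n n F) = c • f u := hg
  have hfuv : f u * f v = 1 := by rw [← map_mul, huv, map_one]
  have hginv : ((g⁻¹ : GL n F) : Matrix n n F) = c⁻¹ • f v :=
    Units.inv_eq_of_mul_eq_one_right <| by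
      rw [hg, smul_mul_smul_comm, mul_inv_cancel₀ hc, one_smul, hfuv]
  have hconj (a : Matrix n n F) :
      (g : Matrix n n F) * a * ((g⁻¹ : GL n F) : Matrix n n F) = f u * a * f v := by
    simp only [hginv, hg, Matrix.smul_mul, Matrix.mul_smul, smul_smul, inv_mul_cancel₀ hc,
      one_smul]
  simp only [hconj]
  refine Set.Subset.antisymm ?_ fun a ⟨M, hM⟩ => ⟨f (v * M * u), ⟨_, rfl⟩, ?_⟩
  · rintro _ ⟨_, ⟨M, rfl⟩, rfl⟩
    exact ⟨u * M * v, by simp only [map_mul]⟩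
  · simp only [map_mul, hM]
    rw [← mul_assoc, ← mul_assoc, hfuv, one_mul, mul_assoc, hfuv, mul_one]

theorem exists_eq_smul_of_mapsTo_conj [Nonempty n] [IsDomain R] [ValuationRing R]
    [IsFractionRing R F] {g : GL n F}
    (h : Set.MapsTo (fun a => (g : Matrix n n F) * a * ((g⁻¹ : GL n F) : Matrix n n F))
      (((algebraMap R F).mapMatrix (m := n)).range : Set (Matrix n n F))
      ((algebraMap R F).mapMatrix (m := n)).range) :
    ∃ c : F, c ≠ 0 ∧ ∃ u v : Matrix n n R, u * v = 1 ∧ v * u = 1 ∧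
      (g : Matrix n n F) = c • u.map (algebraMap R F) := by
  set f := (algebraMap R F).mapMatrix (m := n)
  have hg0 : (fun p : n × n => (g : Matrix n n F) p.1 p.2) ≠ 0 := fun h0 =>
    g.ne_zero (funext₂ fun i j => congrFun h0 (i, j))
  obtain ⟨⟨k, l⟩, hc, hdiv⟩ :=
    ValuationRing.exists_ne_zero_forall_isInteger_div (R := R) hg0
  set c := (g : Matrix n n F) k l
  obtain ⟨u, hu⟩ : c⁻¹ • (g : Matrix n n F) ∈ f.range :=
    mem_range_mapMatrix_algebraMap_iff.mpr fun i j => by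
      simpa [div_eq_inv_mul] using hdiv (i, j)
  obtain ⟨v, hv⟩ : c • ((g⁻¹ : GL n F) : Matrix n n F) ∈ f.range :=
    mem_range_mapMatrix_algebraMap_iff.mpr fun i j => by
      have hsingle : single l i (1 : F) ∈ f.range := ⟨single l i 1, by simp [f, map_single]⟩
      simpa [mul_single_one_mul_apply] using
        mem_range_mapMatrix_algebraMap_iff.mp (h hsingle) k j
  have hf : Function.Injective f := map_injective (IsFractionRing.injective R F)
  refine ⟨c, hc, u, v, hf ?_, hf ?_, ?_⟩
  · rw [map_mul, hu, hv, smul_mul_smul_comm, inv_mul_cancel₀ hc, one_smul, g.mul_inv, map_one]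
  · rw [map_mul, hu, hv, smul_mul_smul_comm, mul_inv_cancel₀ hc, one_smul, g.inv_mul, map_one]
  · rw [← RingHom.mapMatrix_apply, hu, smul_smul, mul_inv_cancel₀ hc, one_smul]

theorem exists_eq_zpow_smul_of_eq_smul [IsDomain R] [IsDiscreteValuationRing R]
    [IsFractionRing R F] {ϖ : R} (hϖ : Irreducible ϖ) {c : F} (hc : c ≠ 0) {u v : Matrix n n R}
    (huv : u * v = 1) (hvu : v * u = 1) {g : Matrix n n F}
    (hg : g = c • u.map (algebraMap R F)) :
    ∃ m : ℤ, ∃ u' v' : Matrix n n R, u' * v' = 1 ∧ v' * u' = 1 ∧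
      g = algebraMap R F ϖ ^ m • u'.map (algebraMap R F) := by
  obtain ⟨m, w, rfl⟩ := IsDiscreteValuationRing.exists_units_eq_smul_zpow_of_irreducible hϖ hc
  refine ⟨m, (w : R) • u, ((w⁻¹ : Rˣ) : R) • v, ?_, ?_, ?_⟩
  · rw [smul_mul_smul_comm, ← Units.val_mul, mul_inv_cancel, Units.val_one, one_smul, huv]
  · rw [smul_mul_smul_comm, ← Units.val_mul, inv_mul_cancel, Units.val_one, one_smul, hvu]
  · ext i j
    simp only [hg, smul_apply, map_apply, Units.smul_def, smul_eq_mul, map_mul,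
      Algebra.smul_def (A := F)]
    ring

end Matrix

/-- `g ∈ GLₙ(F)` normalizes `Matₙ(R)` if and only if `g = ϖ^m · u`
for some `m ∈ ℤ` and `u ∈ GLₙ(R)`. -/
theorem normalizer_matR_eq
    (R : Type*) [CommRing R] [IsDomain R] [IsDiscreteValuationRing R]
    (F : Type*) [Field F] [Algebra R F] [IsFractionRing R F]
    (ϖ : R) (hϖ : Ideal.span {ϖ} = maximalIdeal R)
    (n : ℕ) (hn : 1 ≤ n) (g : GL (Fin n) F) :
    ((fun a => (g : Matrix (Fin n) (Fin n) F) * a *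
          ((g⁻¹ : GL (Fin n) F) : Matrix (Fin n) (Fin n) F)) ''
        {a : Matrix (Fin n) (Fin n) F | ∀ i j : Fin n, ∃ r : R, a i j = algebraMap R F r} =
      {a : Matrix (Fin n) (Fin n) F | ∀ i j : Fin n, ∃ r : R, a i j = algebraMap R F r}) ↔
    ∃ m : ℤ, ∃ u v : Matrix (Fin n) (Fin n) R, u * v = 1 ∧ v * u = 1 ∧
      (g : Matrix (Fin n) (Fin n) F) =
        (algebraMap R F ϖ) ^ m • (u.map (algebraMap R F)) := by
  have hS : {a : Matrix (Fin n) (Fin n) F | ∀ i j : Fin n, ∃ r : R, a i j = algebraMap R F r} =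
      ((algebraMap R F).mapMatrix (m := Fin n)).range := by
    ext a
    simp only [Set.mem_ofPred_eq, SetLike.mem_coe, Matrix.mem_range_mapMatrix_algebraMap_iff,
      IsLocalization.IsInteger, RingHom.mem_rangeS, eq_comm]
  have hirr : Irreducible ϖ :=
    (IsDiscreteValuationRing.irreducible_iff_uniformizer ϖ).mpr hϖ.symm
  rw [hS]
  constructor
  · intro h
    have : Nonempty (Fin n) := ⟨⟨0, hn⟩⟩
    obtain ⟨c, hc, u, v, huv, hvu, hg⟩ :=
      Matrix.exists_eq_smul_of_mapsTo_conj (Set.mapsTo_iff_image_subset.mpr h.subset)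
    exact Matrix.exists_eq_zpow_smul_of_eq_smul hirr hc huv hvu hg
  · rintro ⟨m, u, v, huv, -, hg⟩
    have hϖF : algebraMap R F ϖ ≠ 0 :=
      (map_ne_zero_iff _ (IsFractionRing.injective R F)).mpr hirr.ne_zero
    exact Matrix.image_conj_range_mapMatrix_of_eq_smul (zpow_ne_zero m hϖF) huv hg
end

section
/- For every integer n ≥ 1 and every B ∈ U_𝔦, the characteristic polynomial of the matrix Π·B ∈ Matₙ(R) is Eisenstein. -/
/-!
Row `i` of `Π·B` is row `i + 1` of `B` for `i < n`, and its last row is `ϖ` times the first row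
of `B`. Since `B` is upper triangular modulo `𝔪`, `Π·B` is strictly upper triangular modulo `𝔪`,
so its characteristic polynomial reduces to `X ^ n`. The constant coefficient is
`± det Π · det B = ± ϖ · det B`, with `det B` a unit, hence again a uniformizer, which does not
lie in `𝔪²`.
-/

open IsLocalRing

variable (R : Type*) [CommRing R] [IsDomain R] [IsDiscreteValuationRing R]

/-- The Iwahori order `𝔦`, as a set: matrices over `R` whose entries strictly below the
diagonal lie in the maximal ideal `𝔪`. -/
def iw (n : ℕ) : Set (Matrix (Fin n) (Fin n) R) :=
  {M | ∀ i j : Fin n, (j : ℕ) < (i : ℕ) → M i j ∈ maximalIdeal R}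

/-- The unit group `U_𝔦` of the Iwahori order: matrices `u ∈ 𝔦` invertible with
inverse in `𝔦`. -/
def Uiw (n : ℕ) : Set (Matrix (Fin n) (Fin n) R) :=
  {u | u ∈ iw R n ∧ ∃ v ∈ iw R n, u * v = 1 ∧ v * u = 1}

/-- A monic polynomial `x^n + a_{n-1}x^{n-1} + ⋯ + a_0 ∈ R[x]` is Eisenstein if all
lower coefficients lie in `𝔪` and the constant coefficient is not in `𝔪²`. -/
def IsEisensteinPoly (f : Polynomial R) : Prop :=
  f.Monic ∧ (∀ i < f.natDegree, f.coeff i ∈ maximalIdeal R) ∧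
    f.coeff 0 ∉ (maximalIdeal R) ^ 2

open Polynomial Matrix

theorem Matrix.charpoly_coeff_mem_of_forall_le_mem {S ι : Type*} [CommRing S] [LinearOrder ι]
    [Fintype ι] (I : Ideal S) (M : Matrix ι ι S) (hM : ∀ i j, j ≤ i → M i j ∈ I) {k : ℕ}
    (hk : k < Fintype.card ι) : M.charpoly.coeff k ∈ I := by
  have hzero : ∀ i j, j ≤ i → Ideal.Quotient.mk I (M i j) = 0 := fun i j hij =>
    Ideal.Quotient.eq_zero_iff_mem.mpr (hM i j hij)
  have hbar : (M.map (Ideal.Quotient.mk I)).charpoly = X ^ Fintype.card ι := by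
    rw [charpoly_of_isUpperTriangular (M.map (Ideal.Quotient.mk I))
      fun i j hij => hzero i j hij.le]
    simp [hzero _ _ le_rfl]
  rw [← Ideal.Quotient.eq_zero_iff_mem, ← coeff_map, ← charpoly_map, hbar, coeff_X_pow,
    if_neg hk.ne]

theorem Irreducible.notMem_maximalIdeal_sq {S : Type*} [CommRing S]
    [IsDomain S] [IsDiscreteValuationRing S] {ϖ : S} (hϖ : Irreducible ϖ) :
    ϖ ∉ maximalIdeal S ^ 2 := by
  rw [hϖ.maximalIdeal_eq, Ideal.span_singleton_pow, Ideal.mem_span_singleton]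
  intro h
  have := (pow_dvd_pow_iff (n := 2) (m := 1) hϖ.ne_zero hϖ.not_isUnit).mp (by rwa [pow_one])
  omega

section

variable {R : Type*} [CommRing R]

theorem piMat_eq_diagonal_mul_permMatrix (ϖ : R) (m : ℕ) :
    PiMat R ϖ (m + 1) =
      diagonal (fun i : Fin (m + 1) => if (i : ℕ) = m then ϖ else 1) *
        (finRotate (m + 1)).permMatrix R := by
  ext i j
  rw [diagonal_mul]
  simp only [PiMat, of_apply, Equiv.Perm.permMatrix, PEquiv.toMatrix_apply,
    Equiv.toPEquiv_apply, Option.mem_def, Option.some.injEq, finRotate_apply,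
    Fin.ext_iff, Fin.val_add_one, Fin.val_last, Nat.add_sub_cancel]
  have := i.isLt
  have := j.isLt
  split_ifs <;> first | ring1 | (exfalso; omega)

theorem det_piMat (ϖ : R) (m : ℕ) : (PiMat R ϖ (m + 1)).det = (-1) ^ m * ϖ := by
  have hprod : (∏ i : Fin (m + 1), if (i : ℕ) = m then ϖ else 1) = ϖ :=
    (Fintype.prod_eq_single (Fin.last m) fun i hi => if_neg fun h => hi (Fin.ext h)).trans
      (if_pos rfl)
  rw [piMat_eq_diagonal_mul_permMatrix, det_mul, det_diagonal, det_permutation, sign_finRotate,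
    hprod]
  simp [mul_comm]

theorem associated_charpoly_coeff_zero_piMat_mul (ϖ : R) {m : ℕ}
    {B : Matrix (Fin (m + 1)) (Fin (m + 1)) R} (hB : IsUnit B.det) :
    Associated ϖ ((PiMat R ϖ (m + 1) * B).charpoly.coeff 0) := by
  have hdet : Associated ϖ (PiMat R ϖ (m + 1) * B).det := by
    rw [det_mul, det_piMat, mul_assoc]
    exact (associated_mul_unit_right ϖ _ hB).trans
      (associated_unit_mul_right _ _ (isUnit_neg_one.pow m))
  have hcoeff : Associated ((PiMat R ϖ (m + 1) * B).charpoly.coeff 0)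
      (PiMat R ϖ (m + 1) * B).det := by
    rw [det_eq_sign_charpoly_coeff]
    exact associated_unit_mul_right _ _ (isUnit_neg_one.pow _)
  exact hdet.trans hcoeff.symm

end

section

variable {R}

theorem piMat_mul_apply_mem_maximalIdeal {ϖ : R} (hϖ : ϖ ∈ maximalIdeal R) {m : ℕ}
    {B : Matrix (Fin (m + 1)) (Fin (m + 1)) R} (hB : B ∈ iw R (m + 1)) (i j : Fin (m + 1))
    (hij : j ≤ i) : (PiMat R ϖ (m + 1) * B) i j ∈ maximalIdeal R := by
  rw [piMat_eq_diagonal_mul_permMatrix, Matrix.mul_assoc, Equiv.Perm.permMatrix,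
    PEquiv.toMatrix_toPEquiv_mul, diagonal_mul, submatrix_apply, id]
  by_cases hi : (i : ℕ) = m
  · rw [if_pos hi]
    exact Ideal.mul_mem_right _ _ hϖ
  · rw [if_neg hi, one_mul]
    apply hB
    rw [coe_finRotate, if_neg fun h => hi (by rw [h, Fin.val_last])]
    exact Nat.lt_succ_of_le hij

end

/-- For every `n ≥ 1` and every `B ∈ U_𝔦`, the characteristic
polynomial of `Π·B` is Eisenstein (of degree `n`). -/
theorem charpoly_piMat_mul_isEisenstein (ϖ : R) (hϖ : Ideal.span {ϖ} = maximalIdeal R)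
    (n : ℕ) (hn : 1 ≤ n) (B : Matrix (Fin n) (Fin n) R) (hB : B ∈ Uiw R n) :
    IsEisensteinPoly R (PiMat R ϖ n * B).charpoly ∧
      (PiMat R ϖ n * B).charpoly.natDegree = n := by
  obtain ⟨m, rfl⟩ : ∃ m, n = m + 1 := ⟨n - 1, by omega⟩
  obtain ⟨hBiw, v, -, hBv, -⟩ := hB
  have hirr : Irreducible ϖ :=
    (IsDiscreteValuationRing.irreducible_iff_uniformizer ϖ).mpr hϖ.symm
  have hdeg : (PiMat R ϖ (m + 1) * B).charpoly.natDegree = m + 1 := by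
    rw [charpoly_natDegree_eq_dim, Fintype.card_fin]
  refine ⟨⟨charpoly_monic _, fun k hk => ?_, ?_⟩, hdeg⟩
  · refine charpoly_coeff_mem_of_forall_le_mem _ _ (piMat_mul_apply_mem_maximalIdeal ?_ hBiw) ?_
    · exact hϖ ▸ Ideal.mem_span_singleton_self ϖ
    · rwa [Fintype.card_fin, ← hdeg]
  · exact Irreducible.notMem_maximalIdeal_sq <|
      (associated_charpoly_coeff_zero_piMat_mul ϖ (isUnit_det_of_right_inverse hBv)).irreducible
        hirr
end

section
/- Let n ≥ 1 and let M ∈ Matₙ(R) be a matrix whose characteristic polynomial is Eisenstein. Then there exist h ∈ GLₙ(R) and B ∈ U_𝔦 such that h⁻¹·M·h = Π·B. -/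
open IsLocalRing

variable (R : Type*) [CommRing R] [IsDomain R] [IsDiscreteValuationRing R]

/-!
Reduce modulo `𝔪`. The characteristic polynomial of `M̄` is `Xⁿ`, so `M̄ⁿ = 0`; and `M̄ⁿ⁻¹ ≠ 0`,
for otherwise `Mⁿ⁻¹ = det M • N` and `det(M)ⁿ⁻¹ = det(M)ⁿ det N` would make the uniformizer
`det M = ±a₀` a unit. A vector `v` with `M̄ⁿ⁻¹ v̄ ≠ 0` is cyclic modulo `𝔪`, so
`h = (Mⁿ⁻¹v | ⋯ | Mv | v)` lies in `GLₙ(R)` and `h⁻¹Mh` is the companion matrix of the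
characteristic polynomial, with first column `(-aₙ₋₁, …, -a₀)` and ones above the diagonal.
Writing `a₀ = dϖ` with `d` a unit, it equals `Π·B`, where `B` is the identity with first column
replaced by `(-d, -aₙ₋₁, …, -a₁)`. Modulo `𝔪`, `B` is upper triangular with unit determinant
`-d`, so its inverse is upper triangular as well, i.e. `B ∈ U_𝔦`.
-/

open Polynomial

theorem linearIndependent_pow_apply_of_pow_succ_apply_eq_zero {K V : Type*} [DivisionRing K]
    [AddCommGroup V] [Module K V] (f : V →ₗ[K] V) {v : V} {m : ℕ} (hm : (f ^ m) v ≠ 0)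
    (hm1 : (f ^ (m + 1)) v = 0) : LinearIndependent K fun k : Fin (m + 1) => (f ^ (k : ℕ)) v := by
  rw [Fintype.linearIndependent_iff]
  intro c hc i
  induction i using WellFoundedLT.induction with
  | ind i IH =>
  -- applying `f ^ (m - i)` kills every term but the `i`-th, the earlier coefficients being `0`
  have hci := congrArg (f ^ (m - i)) hc
  rw [map_sum, map_zero, Finset.sum_eq_single i] at hci
  · rw [map_smul, ← Module.End.mul_apply, ← pow_add, Nat.sub_add_cancel (Nat.le_of_lt_succ i.2)]
      at hci
    exact (smul_eq_zero.mp hci).resolve_right hm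
  · intro k _ hki
    rcases lt_or_gt_of_ne hki with hlt | hgt
    · rw [IH k hlt, zero_smul, map_zero]
    · rw [map_smul, ← Module.End.mul_apply, ← pow_add,
        show m - i + k = (k - i - 1) + (m + 1) by omega, pow_add, Module.End.mul_apply, hm1,
        map_zero, smul_zero]
  · simp

theorem pow_eq_neg_sum_of_aeval_eq_zero {S A : Type*} [CommRing S] [Ring A] [Algebra S A]
    {f : S[X]} {m : ℕ} (hf : f.Monic) (hdeg : f.natDegree = m + 1) {x : A} (hx : aeval x f = 0) :
    x ^ (m + 1) = -∑ t ∈ Finset.range (m + 1), f.coeff t • x ^ t := by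
  rw [aeval_eq_sum_range, hdeg, Finset.sum_range_succ, ← hdeg, hf.coeff_natDegree, one_smul,
    hdeg] at hx
  exact eq_neg_of_add_eq_zero_right hx

theorem Matrix.irreducible_det_iff {S ι : Type*} [CommRing S] [Fintype ι] [DecidableEq ι]
    {M : Matrix ι ι S} : Irreducible M.det ↔ Irreducible (M.charpoly.coeff 0) := by
  rw [Matrix.det_eq_sign_charpoly_coeff, irreducible_isUnit_mul (isUnit_one.neg.pow _)]

theorem Matrix.det_one_updateCol {S ι : Type*} [CommRing S] [Fintype ι] [DecidableEq ι] (j : ι)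
    (b : ι → S) : ((1 : Matrix ι ι S).updateCol j b).det = b j := by
  simpa [Matrix.one_apply] using Matrix.det_updateCol_sum (1 : Matrix ι ι S) j b

theorem finRotate_castSucc {m : ℕ} (k : Fin m) : finRotate (m + 1) k.castSucc = k.succ :=
  Fin.ext (coe_finRotate_of_ne_last k.castSucc_ne_last)


section Krylov

open Matrix

variable {S ι : Type*} [CommRing S] [Fintype ι] [DecidableEq ι]

def krylov (M : Matrix ι ι S) (v : ι → S) (m : ℕ) : Matrix ι (Fin (m + 1)) S :=
  Matrix.of fun a i => (M ^ (m - i) *ᵥ v) a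

/-- The companion matrix of `f` (of degree `m + 1`) for the basis `X ^ m, …, X, 1`. -/
def companionMatrix (f : S[X]) (m : ℕ) : Matrix (Fin (m + 1)) (Fin (m + 1)) S :=
  Matrix.of fun k i => if i = 0 then -f.coeff (m - k) else if (i : ℕ) = k + 1 then 1 else 0

theorem mul_krylov {f : S[X]} {m : ℕ} (hf : f.Monic) (hdeg : f.natDegree = m + 1)
    {M : Matrix ι ι S} (hM : aeval M f = 0) (v : ι → S) :
    M * krylov M v m = krylov M v m * companionMatrix f m := by
  ext a i
  have hleft : (M * krylov M v m) a i = (M ^ (m - i + 1) *ᵥ v) a := by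
    rw [pow_succ', ← mulVec_mulVec]
    rfl
  rw [hleft, mul_apply]
  rcases Fin.eq_zero_or_eq_succ i with rfl | ⟨j, rfl⟩
  · rw [Fin.val_zero, Nat.sub_zero, pow_eq_neg_sum_of_aeval_eq_zero hf hdeg hM]
    simp only [krylov, companionMatrix, of_apply, if_true, Fin.val_zero, neg_mulVec, Pi.neg_apply,
      sum_mulVec, Finset.sum_apply, smul_mulVec, Pi.smul_apply, smul_eq_mul]
    rw [Fin.sum_univ_eq_sum_range (fun k => (M ^ (m - k) *ᵥ v) a * -f.coeff (m - k)),
      ← Finset.sum_range_reflect _ (m + 1), ← Finset.sum_neg_distrib]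
    exact Finset.sum_congr rfl fun k _ => by rw [Nat.add_sub_cancel]; ring
  · rw [Finset.sum_eq_single j.castSucc]
    · simp [krylov, companionMatrix, Nat.sub_add_eq, Nat.sub_add_cancel (Nat.sub_pos_of_lt j.2)]
    · intro k _ hkj
      simp only [companionMatrix, of_apply, Fin.succ_ne_zero, if_false, Fin.val_succ,
        Nat.add_right_cancel_iff]
      rw [if_neg fun h : (j : ℕ) = k => hkj (Fin.ext h.symm), mul_zero]
    · simp

theorem krylov_map {T : Type*} [CommRing T] (g : S →+* T) (M : Matrix ι ι S) (v : ι → S)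
    (m : ℕ) : (krylov M v m).map g = krylov (M.map g) (g ∘ v) m := by
  ext a i
  simp [krylov, RingHom.map_mulVec, Matrix.map_pow]

theorem isUnit_krylov {K : Type*} [Field K] {m : ℕ} {N : Matrix (Fin (m + 1)) (Fin (m + 1)) K}
    {w : Fin (m + 1) → K} (hN : N ^ (m + 1) = 0) (hw : N ^ m *ᵥ w ≠ 0) :
    IsUnit (krylov N w m) := by
  rw [← linearIndependent_cols_iff_isUnit]
  have hind := linearIndependent_pow_apply_of_pow_succ_apply_eq_zero (toLin' N) (v := w)
    (by rwa [← toLin'_pow, toLin'_apply]) (by rw [← toLin'_pow, toLin'_apply, hN, zero_mulVec])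
  have hcol : (krylov N w m).col = (fun k : Fin (m + 1) => (toLin' N ^ (k : ℕ)) w) ∘ Fin.rev := by
    ext i a
    simp only [col, krylov, of_apply, transpose_apply, Function.comp_apply, ← toLin'_pow, toLin'_apply,
      Fin.val_rev, Nat.add_sub_add_right]
  rw [hcol]
  exact hind.comp _ Fin.rev_injective

end Krylov

section LocalRing

variable {A : Type*} [CommRing A] [IsLocalRing A]

theorem exists_isUnit_mul_of_mem_of_notMem_sq {ϖ x : A} (hϖ : Ideal.span {ϖ} = maximalIdeal A)
    (hx : x ∈ maximalIdeal A) (hx2 : x ∉ maximalIdeal A ^ 2) : ∃ d, IsUnit d ∧ x = d * ϖ := by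
  rw [← hϖ] at hx
  obtain ⟨d, rfl⟩ := Ideal.mem_span_singleton'.mp hx
  refine ⟨d, of_not_not fun hd => hx2 ?_, rfl⟩
  have : d ∈ Ideal.span {ϖ} := hϖ ▸ (mem_maximalIdeal d).mpr hd
  obtain ⟨e, rfl⟩ := Ideal.mem_span_singleton'.mp this
  rw [← hϖ, Ideal.span_singleton_pow, sq, mul_assoc]
  exact Ideal.mul_mem_left _ _ (Ideal.mem_span_singleton_self _)

theorem map_residue_pow_card_eq_zero {ι : Type*} [Fintype ι] [DecidableEq ι] (M : Matrix ι ι A)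
    (hM : M.charpoly.IsDistinguishedAt (maximalIdeal A)) :
    M.map (residue A) ^ Fintype.card ι = 0 := by
  have hχ : (M.map (residue A)).charpoly = X ^ Fintype.card ι := by
    rw [Matrix.charpoly_map, ← Matrix.charpoly_natDegree_eq_dim M]
    exact hM.map_eq_X_pow
  simpa [hχ] using (M.map (residue A)).aeval_self_charpoly

theorem isUnit_det_krylov {m : ℕ} {M : Matrix (Fin (m + 1)) (Fin (m + 1)) A}
    {v : Fin (m + 1) → A} (hM : M.map (residue A) ^ (m + 1) = 0)
    (hv : (M.map (residue A) ^ m).mulVec (residue A ∘ v) ≠ 0) : IsUnit (krylov M v m).det := by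
  rw [← residue_ne_zero_iff_isUnit, RingHom.map_det, RingHom.mapMatrix_apply, krylov_map]
  exact ((Matrix.isUnit_iff_isUnit_det _).mp (isUnit_krylov hM hv)).ne_zero

end LocalRing

section PiMat

variable {S : Type*} [CommRing S]

theorem piMat_apply (ϖ : S) {m : ℕ} (k t : Fin (m + 1)) :
    PiMat S ϖ (m + 1) k t =
      if t = finRotate (m + 1) k then (if k = Fin.last m then ϖ else 1) else 0 := by
  simp only [PiMat, Matrix.of_apply, Fin.ext_iff, coe_finRotate, Fin.val_last,
    Nat.add_sub_cancel]
  have := t.2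
  split_ifs <;> first | rfl | omega

theorem piMat_mul_apply_s6 (ϖ : S) {m : ℕ} (B : Matrix (Fin (m + 1)) (Fin (m + 1)) S)
    (k j : Fin (m + 1)) :
    (PiMat S ϖ (m + 1) * B) k j =
      (if k = Fin.last m then ϖ else 1) * B (finRotate (m + 1) k) j := by
  simp [Matrix.mul_apply, piMat_apply]

theorem piMat_mul_updateCol_eq_companionMatrix {ϖ : S} {m : ℕ} {f : S[X]} {b : Fin (m + 1) → S}
    (hb0 : ϖ * b 0 = -f.coeff 0) (hb : ∀ i : Fin m, b i.succ = -f.coeff (m - i)) :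
    PiMat S ϖ (m + 1) * (1 : Matrix _ _ S).updateCol 0 b = companionMatrix f m := by
  ext k j
  rw [piMat_mul_apply_s6]
  induction k using Fin.lastCases with
  | last =>
    rw [if_pos rfl, finRotate_last]
    rcases Fin.eq_zero_or_eq_succ j with rfl | ⟨j, rfl⟩
    · simp [companionMatrix, hb0]
    · rw [Matrix.updateCol_ne j.succ_ne_zero, Matrix.one_apply_ne j.succ_ne_zero.symm, mul_zero]
      have := j.2
      simp [companionMatrix, j.succ_ne_zero]
      omega
  | cast k =>
    rw [if_neg k.castSucc_ne_last, one_mul, finRotate_castSucc]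
    rcases Fin.eq_zero_or_eq_succ j with rfl | ⟨j, rfl⟩
    · simp [companionMatrix, hb]
    · rw [Matrix.updateCol_ne j.succ_ne_zero]
      simp only [companionMatrix, Matrix.of_apply, j.succ_ne_zero, if_false, Fin.val_succ,
        Fin.val_castSucc, Nat.add_right_cancel_iff, Matrix.one_apply, Fin.succ_inj, Fin.val_inj,
        eq_comm]

end PiMat

section DiscreteValuationRing

variable {R}

theorem map_residue_pow_ne_zero_of_irreducible_det {ι : Type*} [Fintype ι] [DecidableEq ι]
    {m : ℕ} (hcard : Fintype.card ι = m + 1) {M : Matrix ι ι R} (hM : Irreducible M.det) :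
    M.map (residue R) ^ m ≠ 0 := by
  intro h0
  have hmem (a b : ι) : (M ^ m) a b ∈ Ideal.span {M.det} := by
    rw [← (IsDiscreteValuationRing.irreducible_iff_uniformizer _).mp hM, ← residue_eq_zero_iff,
      ← Matrix.map_apply (f := residue R), Matrix.map_pow, h0, Matrix.zero_apply]
  choose N hN using fun a b => Ideal.mem_span_singleton'.mp (hmem a b)
  have hMN : M ^ m = M.det • Matrix.of N := by
    ext a b
    simp [← hN a b, mul_comm]
  have hdet := congrArg Matrix.det hMN
  rw [Matrix.det_pow, Matrix.det_smul, hcard, pow_succ, mul_assoc] at hdet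
  have hinv : M.det * (Matrix.of N).det = 1 :=
    mul_left_cancel₀ (pow_ne_zero m hM.ne_zero) (hdet.symm.trans (mul_one _).symm)
  exact hM.not_isUnit (.of_mul_eq_one _ hinv)

theorem exists_map_residue_pow_mulVec_ne_zero {ι : Type*} [Fintype ι] [DecidableEq ι] {m : ℕ}
    (hcard : Fintype.card ι = m + 1) {M : Matrix ι ι R} (hM : Irreducible M.det) :
    ∃ v : ι → R, (M.map (residue R) ^ m).mulVec (residue R ∘ v) ≠ 0 := by
  by_contra! h
  refine map_residue_pow_ne_zero_of_irreducible_det hcard hM (Matrix.ext_iff_mulVec.mpr fun w => ?_)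
  obtain ⟨v, rfl⟩ := (residue_surjective (R := R)).comp_left w
  rw [h, Matrix.zero_mulVec]

theorem mem_iw_iff_blockTriangular {n : ℕ} {u : Matrix (Fin n) (Fin n) R} :
    u ∈ iw R n ↔ (u.map (residue R)).BlockTriangular id := by
  simp only [iw, Set.mem_ofPred_eq, Matrix.BlockTriangular, id, Matrix.map_apply,
    residue_eq_zero_iff, Fin.lt_def]

theorem mem_Uiw_of_isUnit_det {n : ℕ} {u : Matrix (Fin n) (Fin n) R} (hu : u ∈ iw R n)
    (hdet : IsUnit u.det) : u ∈ Uiw R n := by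
  refine ⟨hu, u⁻¹, ?_, u.mul_nonsing_inv hdet, u.nonsing_inv_mul hdet⟩
  have hmap : (u⁻¹).map (residue R) = (u.map (residue R))⁻¹ := by
    refine (Matrix.inv_eq_left_inv ?_).symm
    rw [← Matrix.map_mul, u.nonsing_inv_mul hdet, Matrix.map_one _ (map_zero _) (map_one _)]
  have : Invertible (u.map (residue R)) := by
    refine ((Matrix.isUnit_iff_isUnit_det _).mpr ?_).invertible
    rw [← RingHom.mapMatrix_apply, ← RingHom.map_det]
    exact hdet.map _
  rw [mem_iw_iff_blockTriangular, hmap]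
  exact Matrix.blockTriangular_inv_of_blockTriangular (mem_iw_iff_blockTriangular.mp hu)

theorem updateCol_one_mem_iw {m : ℕ} {b : Fin (m + 1) → R}
    (hb : ∀ i ≠ 0, b i ∈ maximalIdeal R) : (1 : Matrix _ _ R).updateCol 0 b ∈ iw R (m + 1) := by
  intro i j hji
  rcases eq_or_ne j 0 with rfl | hj
  · rw [Matrix.updateCol_self]
    exact hb i (Fin.pos_iff_ne_zero.mp hji)
  · rw [Matrix.updateCol_ne hj, Matrix.one_apply_ne (Fin.ne_of_gt hji)]
    exact zero_mem _

end DiscreteValuationRing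

/-- A matrix over `R` whose characteristic polynomial is Eisenstein is
`GLₙ(R)`-conjugate to `Π·B` for some `B ∈ U_𝔦`. -/
theorem eisenstein_conjugate_to_piMat_mul (ϖ : R) (hϖ : Ideal.span {ϖ} = maximalIdeal R)
    (n : ℕ) (hn : 1 ≤ n) (M : Matrix (Fin n) (Fin n) R)
    (hM : IsEisensteinPoly R M.charpoly) :
    ∃ h hinv : Matrix (Fin n) (Fin n) R, h * hinv = 1 ∧ hinv * h = 1 ∧
      ∃ B ∈ Uiw R n, hinv * M * h = PiMat R ϖ n * B := by
  obtain ⟨m, rfl⟩ : ∃ m, n = m + 1 := ⟨n - 1, by omega⟩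
  obtain ⟨hmon, hlow, hsq⟩ := hM
  have hdeg : M.charpoly.natDegree = m + 1 := by
    rw [Matrix.charpoly_natDegree_eq_dim, Fintype.card_fin]
  obtain ⟨d, hd, hd0⟩ := exists_isUnit_mul_of_mem_of_notMem_sq hϖ (hlow 0 (by omega)) hsq
  have hirr : Irreducible M.det := Matrix.irreducible_det_iff.mpr <| hd0 ▸
    (irreducible_isUnit_mul hd).mpr ((IsDiscreteValuationRing.irreducible_iff_uniformizer ϖ).mpr
      hϖ.symm)
  obtain ⟨v, hv⟩ := exists_map_residue_pow_mulVec_ne_zero (Fintype.card_fin _) hirr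
  have hh := isUnit_det_krylov
    (by simpa using map_residue_pow_card_eq_zero M ⟨⟨fun h => hlow _ h⟩, hmon⟩) hv
  set B := (1 : Matrix (Fin (m + 1)) (Fin (m + 1)) R).updateCol 0
    (Fin.cons (-d) fun i : Fin m => -M.charpoly.coeff (m - i))
  have hB : B ∈ Uiw R (m + 1) := by
    refine mem_Uiw_of_isUnit_det (updateCol_one_mem_iw fun i hi => ?_) ?_
    · obtain ⟨j, rfl⟩ := Fin.exists_succ_eq.mpr hi
      exact neg_mem (hlow _ (by omega))
    · rw [Matrix.det_one_updateCol]
      exact hd.neg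
  refine ⟨_, _, Matrix.mul_nonsing_inv _ hh, Matrix.nonsing_inv_mul _ hh, B, hB, ?_⟩
  rw [piMat_mul_updateCol_eq_companionMatrix (by simp [hd0, mul_comm]) fun i => rfl,
    Matrix.mul_assoc, mul_krylov hmon hdeg M.aeval_self_charpoly, ← Matrix.mul_assoc,
    Matrix.nonsing_inv_mul _ hh, Matrix.one_mul]
end

section
/- Let p be a prime number, let j be an integer with 1 < j < p, and let B ∈ U_𝔦 (for n = p). Let D ∈ Mat_p(k) be the reduction of Π^j·B modulo 𝔪. Then the centralizer of D in GL_p(k), i.e. {g ∈ GL_p(k) : g·D = D·g}, is not commutative. (In the terminology of the paper: Π^j·B is not regular.) -/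
open IsLocalRing

variable (R : Type*) [CommRing R] [IsDomain R] [IsDiscreteValuationRing R]

/-!
Modulo `𝔪` the matrix `Π` becomes the nilpotent shift `N`, and `B` an invertible upper
triangular matrix, so `D = N^j B̄` vanishes below its `j`-th superdiagonal and has no zero on
it. This shape is inherited by the powers `D^m` (with `j m` in place of `j`), so the matrix `C`
whose `i`-th row is row `i mod j` of `D^⌊i/j⌋` is upper triangular and invertible, and it
satisfies `C D = N^j C`. Hence `D` is conjugate to `N^j`, which for `1 < j < p` has at least two
Jordan chains (the residue classes mod `j`). The unipotent matrices `1 + A`, `1 + A'`, where `A`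
and `A'` push the chain of `1` into that of `0` and back, commute with `N^j` but not with each
other.
-/

open Matrix

theorem Matrix.IsUpperTriangular.isUnit_iff {K m : Type*} [CommRing K] [Fintype m] [LinearOrder m]
    {X : Matrix m m K} (hX : X.IsUpperTriangular) : IsUnit X ↔ ∀ i, IsUnit (X i i) := by
  classical
  rw [isUnit_iff_isUnit_det, det_of_isUpperTriangular hX, IsUnit.prod_univ_iff]

theorem Commute.units_conj_of_semiconjBy {M : Type*} [Monoid M] {u : Mˣ} {x y z : M}
    (h : SemiconjBy (↑u) y x) (hz : Commute z y) : Commute (↑u * z * ↑u⁻¹) x :=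
  (h.mul_left hz).mul_left h.units_inv_symm_left

section Matrices

variable {K : Type*} {n : ℕ}

def HasLeadingSuperdiagonal [Zero K] (D : Matrix (Fin n) (Fin n) K) (j : ℕ) : Prop :=
  (∀ i k : Fin n, (k : ℕ) < i + j → D i k = 0) ∧
    ∀ i k : Fin n, (k : ℕ) = i + j → D i k ≠ 0

theorem hasLeadingSuperdiagonal_zero_iff [Zero K] {D : Matrix (Fin n) (Fin n) K} :
    HasLeadingSuperdiagonal D 0 ↔ D.IsUpperTriangular ∧ ∀ i, D i i ≠ 0 := by
  simp only [HasLeadingSuperdiagonal, add_zero]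
  exact and_congr ⟨fun h i k hki => h i k hki, fun h i k hki => h hki⟩
    ⟨fun h i => h i i rfl, fun h i k hki => Fin.ext hki ▸ h i⟩

theorem hasLeadingSuperdiagonal_one [MulZeroOneClass K] [Nontrivial K] :
    HasLeadingSuperdiagonal (1 : Matrix (Fin n) (Fin n) K) 0 :=
  hasLeadingSuperdiagonal_zero_iff.2 ⟨fun _ _ h => one_apply_ne' h.ne, by simp⟩

theorem Matrix.IsUpperTriangular.hasLeadingSuperdiagonal_zero [CommRing K] [Nontrivial K]
    {D : Matrix (Fin n) (Fin n) K} (hU : D.IsUpperTriangular) (h : IsUnit D) :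
    HasLeadingSuperdiagonal D 0 :=
  hasLeadingSuperdiagonal_zero_iff.2 ⟨hU, fun i => (hU.isUnit_iff.1 h i).ne_zero⟩

namespace HasLeadingSuperdiagonal

theorem isUnit [Field K] {D : Matrix (Fin n) (Fin n) K} (hD : HasLeadingSuperdiagonal D 0) :
    IsUnit D :=
  have ⟨hU, hdiag⟩ := hasLeadingSuperdiagonal_zero_iff.1 hD
  hU.isUnit_iff.2 fun i => (hdiag i).isUnit

variable [Semiring K] [NoZeroDivisors K] {D E : Matrix (Fin n) (Fin n) K} {j m : ℕ}

theorem mul (hD : HasLeadingSuperdiagonal D j) (hE : HasLeadingSuperdiagonal E m) :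
    HasLeadingSuperdiagonal (D * E) (j + m) := by
  constructor
  · intro i k hk
    rw [mul_apply]
    refine Finset.sum_eq_zero fun l _ => ?_
    by_cases hl : (l : ℕ) < i + j
    · rw [hD.1 i l hl, zero_mul]
    · rw [hE.1 l k (by omega), mul_zero]
  · intro i k hk
    have hl : (i : ℕ) + j < n := by omega
    rw [mul_apply, Finset.sum_eq_single ⟨i + j, hl⟩]
    · exact mul_ne_zero (hD.2 i _ rfl) (hE.2 _ k (by simp only; omega))
    · intro l _ hne
      rcases lt_or_gt_of_ne (Fin.val_ne_of_ne hne) with hlt | hgt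
      · rw [hD.1 i l hlt, zero_mul]
      · rw [hE.1 l k (by simp only at hgt; omega), mul_zero]
    · simp

theorem pow [Nontrivial K] (hD : HasLeadingSuperdiagonal D j) (m : ℕ) :
    HasLeadingSuperdiagonal (D ^ m) (j * m) := by
  induction m with
  | zero => exact hasLeadingSuperdiagonal_one
  | succ m ih => rw [pow_succ, mul_add_one]; exact ih.mul hD

end HasLeadingSuperdiagonal

def shiftMatrix [Zero K] [One K] (n c : ℕ) : Matrix (Fin n) (Fin n) K :=
  of fun i k => if (k : ℕ) = i + c then 1 else 0

section Semiring

variable [Semiring K]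

theorem shiftMatrix_mul_apply (c : ℕ) (X : Matrix (Fin n) (Fin n) K) (i k : Fin n) :
    (shiftMatrix n c * X : Matrix (Fin n) (Fin n) K) i k =
      if h : (i : ℕ) + c < n then X ⟨i + c, h⟩ k else 0 := by
  rw [mul_apply]
  split_ifs with h
  · rw [Finset.sum_eq_single ⟨i + c, h⟩] <;> simp +contextual [shiftMatrix, Fin.ext_iff]
  · refine Finset.sum_eq_zero fun l _ => ?_
    simp [shiftMatrix, show (l : ℕ) ≠ i + c by omega]

theorem shiftMatrix_zero : (shiftMatrix n 0 : Matrix (Fin n) (Fin n) K) = 1 := by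
  ext i k
  simp [shiftMatrix, one_apply, Fin.ext_iff, eq_comm]

theorem shiftMatrix_mul_shiftMatrix (a b : ℕ) :
    (shiftMatrix n a * shiftMatrix n b : Matrix (Fin n) (Fin n) K) = shiftMatrix n (a + b) := by
  ext i k
  rw [shiftMatrix_mul_apply]
  split_ifs with h
  · simp [shiftMatrix, add_assoc]
  · simp only [shiftMatrix, of_apply, right_eq_ite_iff]
    omega

theorem shiftMatrix_pow (c m : ℕ) :
    (shiftMatrix n c : Matrix (Fin n) (Fin n) K) ^ m = shiftMatrix n (c * m) := by
  induction m with
  | zero => exact shiftMatrix_zero.symm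
  | succ m ih => rw [pow_succ, ih, shiftMatrix_mul_shiftMatrix, mul_add_one]

theorem commute_shiftMatrix (a b : ℕ) :
    Commute (shiftMatrix n a : Matrix (Fin n) (Fin n) K) (shiftMatrix n b) := by
  rw [Commute, SemiconjBy, shiftMatrix_mul_shiftMatrix, shiftMatrix_mul_shiftMatrix, add_comm]

theorem commute_diagonal_shiftMatrix {c : ℕ} {d : Fin n → K}
    (hd : ∀ i k : Fin n, (k : ℕ) = i + c → d i = d k) :
    Commute (diagonal d) (shiftMatrix n c) := by
  ext i k
  simp only [diagonal_mul, mul_diagonal, shiftMatrix, of_apply]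
  split_ifs with h
  · rw [hd i k h, mul_one, one_mul]
  · simp

theorem hasLeadingSuperdiagonal_shiftMatrix [Nontrivial K] (c : ℕ) :
    HasLeadingSuperdiagonal (shiftMatrix n c : Matrix (Fin n) (Fin n) K) c :=
  ⟨fun i k hk => if_neg hk.ne, fun i k hk => by simp [shiftMatrix, hk]⟩

end Semiring

theorem isUnit_one_add_diagonal_mul_shiftMatrix [CommRing K] (d : Fin n → K) {c : ℕ}
    (hc : 0 < c) : IsUnit (1 + diagonal d * shiftMatrix n c) := by
  have hU : (1 + diagonal d * shiftMatrix n c).IsUpperTriangular := by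
    intro i k (hki : k < i)
    have : (k : ℕ) ≠ i + c := by rw [Fin.lt_def] at hki; omega
    simp [one_apply_ne hki.ne', shiftMatrix, this]
  refine hU.isUnit_iff.2 fun i => ?_
  simp [shiftMatrix, hc.ne']

theorem exists_not_commute_of_commute_shiftMatrix [CommRing K] [Nontrivial K] {j : ℕ}
    (hj1 : 1 < j) (hjn : j < n) :
    ∃ g h : GL (Fin n) K, Commute (g : Matrix (Fin n) (Fin n) K) (shiftMatrix n j) ∧
      Commute (h : Matrix (Fin n) (Fin n) K) (shiftMatrix n j) ∧ ¬Commute g h := by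
  let e (a : ℕ) : Fin n → K := fun i => if (i : ℕ) % j = a then 1 else 0
  have he (a : ℕ) (i k : Fin n) (hk : (k : ℕ) = i + j) : e a i = e a k := by
    simp only [e, hk, Nat.add_mod_right]
  have hcomm (a c : ℕ) : Commute (1 + diagonal (e a) * shiftMatrix n c) (shiftMatrix n j) :=
    (Commute.one_left _).add_left
      ((commute_diagonal_shiftMatrix (he a)).mul_left (commute_shiftMatrix c j))
  set A := diagonal (e 0) * shiftMatrix n 1
  set A' := diagonal (e 1) * shiftMatrix n (j - 1)
  have hA := isUnit_one_add_diagonal_mul_shiftMatrix (e 0) one_pos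
  have hA' := isUnit_one_add_diagonal_mul_shiftMatrix (e 1) (Nat.sub_pos_of_lt hj1)
  refine ⟨hA.unit, hA'.unit, hcomm 0 1, hcomm 1 (j - 1), fun hgh => ?_⟩
  have hAA' : Commute A A' := by
    simpa using (hgh.units_val.sub_left (Commute.one_left _)).sub_right (Commute.one_right _)
  have h0j : (A * A') ⟨0, by omega⟩ ⟨j, hjn⟩ = 1 := by
    rw [mul_assoc, diagonal_mul, shiftMatrix_mul_apply, dif_pos (by simp only; omega)]
    simp [A', e, shiftMatrix, Nat.mod_eq_of_lt hj1, Nat.add_sub_cancel' hj1.le]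
  have h0j' : (A' * A) ⟨0, by omega⟩ ⟨j, hjn⟩ = 0 := by
    simp [A', mul_assoc, e]
  exact one_ne_zero (h0j.symm.trans (hAA'.eq ▸ h0j'))

namespace HasLeadingSuperdiagonal

variable [Field K] {D : Matrix (Fin n) (Fin n) K} {j : ℕ}

theorem exists_mul_eq_shiftMatrix_mul (hD : HasLeadingSuperdiagonal D j) (hj : 0 < j) :
    ∃ C : GL (Fin n) K,
      (C : Matrix (Fin n) (Fin n) K) * D = shiftMatrix n j * (C : Matrix (Fin n) (Fin n) K) := by
  let C : Matrix (Fin n) (Fin n) K :=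
    of fun i k => (D ^ ((i : ℕ) / j)) ⟨i % j, (Nat.mod_le _ _).trans_lt i.isLt⟩ k
  have hC : HasLeadingSuperdiagonal C 0 :=
    ⟨fun i k hk => (hD.pow _).1 _ _ (by have := Nat.mod_add_div i j; simp only; omega),
      fun i k hk => (hD.pow _).2 _ _ (by have := Nat.mod_add_div i j; simp only; omega)⟩
  refine ⟨hC.isUnit.unit, ?_⟩
  ext i k
  have hCD : (C * D) i k =
      (D ^ ((i : ℕ) / j + 1)) ⟨i % j, (Nat.mod_le _ _).trans_lt i.isLt⟩ k := by
    rw [pow_succ]; rfl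
  rw [IsUnit.unit_spec, shiftMatrix_mul_apply, hCD]
  split_ifs with h
  · simp [C, Nat.add_div_right _ hj]
  · exact (hD.pow _).1 _ _ (by have := Nat.mod_add_div i j; simp only [mul_add_one]; omega)

theorem exists_not_commute_of_commute (hD : HasLeadingSuperdiagonal D j)
    (hj1 : 1 < j) (hjn : j < n) :
    ∃ g h : GL (Fin n) K, Commute (g : Matrix (Fin n) (Fin n) K) D ∧
      Commute (h : Matrix (Fin n) (Fin n) K) D ∧ ¬Commute g h := by
  obtain ⟨C, hC⟩ := hD.exists_mul_eq_shiftMatrix_mul (by omega)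
  obtain ⟨g, h, hg, hh, hgh⟩ := exists_not_commute_of_commute_shiftMatrix (K := K) hj1 hjn
  have hCinv : SemiconjBy (↑C⁻¹ : Matrix (Fin n) (Fin n) K) (shiftMatrix n j) D :=
    SemiconjBy.units_inv_symm_left hC
  refine ⟨C⁻¹ * g * C⁻¹⁻¹, C⁻¹ * h * C⁻¹⁻¹, ?_, ?_,
    mt (Commute.conj_iff _).1 hgh⟩
  · simpa only [Units.val_mul] using hg.units_conj_of_semiconjBy hCinv
  · simpa only [Units.val_mul] using hh.units_conj_of_semiconjBy hCinv

end HasLeadingSuperdiagonal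

end Matrices

theorem piMat_map_eq_shiftMatrix {A S : Type*} [CommRing A] [Semiring S] (f : A →+* S) {ϖ : A}
    (hϖ : f ϖ = 0) (n : ℕ) : (PiMat A ϖ n).map f = shiftMatrix n 1 := by
  ext i k
  simp only [PiMat, shiftMatrix, map_apply, of_apply]
  split_ifs <;> simp [hϖ]

section

variable {R}

theorem hasLeadingSuperdiagonal_map_of_mem_Uiw {n : ℕ} {B : Matrix (Fin n) (Fin n) R}
    (hB : B ∈ Uiw R n) :
    HasLeadingSuperdiagonal (B.map (Ideal.Quotient.mk (maximalIdeal R))) 0 := by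
  obtain ⟨hBiw, v, -, hBv, hvB⟩ := hB
  let := Ideal.Quotient.field (maximalIdeal R)
  have hU : (B.map (Ideal.Quotient.mk (maximalIdeal R))).IsUpperTriangular :=
    fun i k hki => Ideal.Quotient.eq_zero_iff_mem.2 (hBiw i k hki)
  exact hU.hasLeadingSuperdiagonal_zero
    ((Units.mk B v hBv hvB).isUnit.map (Ideal.Quotient.mk _).mapMatrix)

end

theorem piPow_mul_not_regular (ϖ : R) (hϖ : Ideal.span {ϖ} = maximalIdeal R)
    (p : ℕ) (j : ℕ) (hj1 : 1 < j) (hjp : j < p)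
    (B : Matrix (Fin p) (Fin p) R) (hB : B ∈ Uiw R p) :
    ∃ g h : GL (Fin p) (R ⧸ maximalIdeal R),
      (g : Matrix (Fin p) (Fin p) (R ⧸ maximalIdeal R)) *
          ((PiMat R ϖ p) ^ j * B).map (Ideal.Quotient.mk (maximalIdeal R)) =
        ((PiMat R ϖ p) ^ j * B).map (Ideal.Quotient.mk (maximalIdeal R)) *
          (g : Matrix (Fin p) (Fin p) (R ⧸ maximalIdeal R)) ∧
      (h : Matrix (Fin p) (Fin p) (R ⧸ maximalIdeal R)) *
          ((PiMat R ϖ p) ^ j * B).map (Ideal.Quotient.mk (maximalIdeal R)) =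
        ((PiMat R ϖ p) ^ j * B).map (Ideal.Quotient.mk (maximalIdeal R)) *
          (h : Matrix (Fin p) (Fin p) (R ⧸ maximalIdeal R)) ∧
      g * h ≠ h * g := by
  let := Ideal.Quotient.field (maximalIdeal R)
  have hϖ0 : Ideal.Quotient.mk (maximalIdeal R) ϖ = 0 :=
    Ideal.Quotient.eq_zero_iff_mem.2 (hϖ ▸ Ideal.mem_span_singleton_self ϖ)
  have hD : HasLeadingSuperdiagonal
      (((PiMat R ϖ p) ^ j * B).map (Ideal.Quotient.mk (maximalIdeal R))) j := by
    rw [Matrix.map_mul, Matrix.map_pow, piMat_map_eq_shiftMatrix _ hϖ0, shiftMatrix_pow, one_mul]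
    simpa using
      (hasLeadingSuperdiagonal_shiftMatrix j).mul (hasLeadingSuperdiagonal_map_of_mem_Uiw hB)
  exact hD.exists_not_commute_of_commute hj1 hjp
end

section
/- Let n ≥ 1 and r ≥ 1 be integers and set l = ⌊(r+1)/2⌋. Then the kernel of the natural group homomorphism GLₙ(R/𝔪^r) → GLₙ(R/𝔪^l), induced by the quotient ring homomorphism R/𝔪^r → R/𝔪^l applied entrywise, is an abelian group. -/
open IsLocalRing

/-!
An element of the kernel is `1 + X` with `X` a matrix over the ideal `𝔪^l / 𝔪^r`, whose square
is zero because `2l ≥ r`. So any two such `X`, `Y` satisfy `XY = 0 = YX`, hence commute, and then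
so do `1 + X` and `1 + Y`.
-/

theorem Commute.of_sub_one {R : Type*} [Ring R] {a b : R} (h : Commute (a - 1) (b - 1)) :
    Commute a b := by
  simpa using (h.add_left (Commute.one_left _)).add_right (Commute.one_right _)

theorem Ideal.Quotient.ker_factor_sq_eq_bot {R : Type*} [CommRing R] {S T : Ideal R}
    (H : S ≤ T) (hT : T ^ 2 ≤ S) : RingHom.ker (Ideal.Quotient.factor H) ^ 2 = ⊥ := by
  rw [Ideal.Quotient.factor_ker, ← Ideal.map_pow]
  exact Ideal.map_mk_eq_bot_of_le hT

section SquareZeroKernel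

variable {A B : Type*} [CommRing A] [CommRing B] {f : A →+* B}
  {n : Type*} [Fintype n] [DecidableEq n]

theorem Matrix.mul_eq_zero_of_ker_sq_eq_bot (hf : RingHom.ker f ^ 2 = ⊥) {M N : Matrix n n A}
    (hM : f.mapMatrix M = 0) (hN : f.mapMatrix N = 0) : M * N = 0 := by
  ext i j
  refine Finset.sum_eq_zero fun k _ => ?_
  have hMik : M i k ∈ RingHom.ker f := congrFun (congrFun hM i) k
  have hNkj : N k j ∈ RingHom.ker f := congrFun (congrFun hN k) j
  have hprod := Ideal.mul_mem_mul hMik hNkj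
  rw [← sq, hf] at hprod
  exact Ideal.mem_bot.mp hprod

theorem Matrix.GeneralLinearGroup.mapMatrix_sub_one_eq_zero {x : GL n A}
    (hx : x ∈ (Units.map f.mapMatrix.toMonoidHom).ker) :
    f.mapMatrix (x - 1 : Matrix n n A) = 0 := by
  have h : f.mapMatrix (x : Matrix n n A) = 1 := congrArg Units.val hx
  rw [map_sub, map_one, h, sub_self]

theorem Matrix.GeneralLinearGroup.commute_of_mem_ker_map (hf : RingHom.ker f ^ 2 = ⊥)
    {x y : GL n A} (hx : x ∈ (Units.map f.mapMatrix.toMonoidHom).ker)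
    (hy : y ∈ (Units.map f.mapMatrix.toMonoidHom).ker) : Commute x y := by
  have hx₁ := mapMatrix_sub_one_eq_zero hx
  have hy₁ := mapMatrix_sub_one_eq_zero hy
  refine Commute.units_of_val (Commute.of_sub_one ?_)
  exact (Matrix.mul_eq_zero_of_ker_sq_eq_bot hf hx₁ hy₁).trans
    (Matrix.mul_eq_zero_of_ker_sq_eq_bot hf hy₁ hx₁).symm

end SquareZeroKernel

/-- For `n, r ≥ 1` and `l = ⌊(r+1)/2⌋`, the kernel of the natural map
`GLₙ(R/𝔪^r) → GLₙ(R/𝔪^l)` is an abelian group. -/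
theorem ker_GL_reduction_abelian
    (R : Type*) [CommRing R] [IsDomain R] [IsDiscreteValuationRing R]
    (n : ℕ) (r : ℕ) :
    ∀ x y : GL (Fin n) (R ⧸ (maximalIdeal R) ^ r),
      x ∈ MonoidHom.ker (Units.map (RingHom.toMonoidHom (RingHom.mapMatrix
        (Ideal.Quotient.factor (S := (maximalIdeal R) ^ r) (T := (maximalIdeal R) ^ ((r + 1) / 2))
          (Ideal.pow_le_pow_right (by omega)))))) →
      y ∈ MonoidHom.ker (Units.map (RingHom.toMonoidHom (RingHom.mapMatrix
        (Ideal.Quotient.factor (S := (maximalIdeal R) ^ r) (T := (maximalIdeal R) ^ ((r + 1) / 2))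
          (Ideal.pow_le_pow_right (by omega)))))) →
      x * y = y * x := by
  intro x y hx hy
  have hsq : ((maximalIdeal R) ^ ((r + 1) / 2)) ^ 2 ≤ (maximalIdeal R) ^ r := by
    rw [← pow_mul]
    exact Ideal.pow_le_pow_right (by omega)
  exact (Matrix.GeneralLinearGroup.commute_of_mem_ker_map
    (Ideal.Quotient.ker_factor_sq_eq_bot _ hsq) hx hy).eq
end

section
/- Let n ≥ 1 and let g ∈ GLₙ(R) (an n×n matrix over R invertible with inverse over R). Then g·𝔦·g⁻¹ = 𝔦 (as subsets of Matₙ(R)) if and only if g ∈ U_𝔦. In other words, the intersection of the normalizer of 𝔦 in GLₙ(F) with GLₙ(R) equals U_𝔦. -/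
open IsLocalRing

variable (R : Type*) [CommRing R] [IsDomain R] [IsDiscreteValuationRing R]

/-
If `g` normalizes `𝔦` then `g E_ij g⁻¹ ∈ 𝔦` for `i ≤ j`, i.e. `g_ki g⁻¹_jl ∈ 𝔪` whenever `i ≤ j`
and `l < k`. As `(g⁻¹ g)_jj = 1`, every `j` has a pivot `π j` with `g⁻¹_{j, π j}` and `g_{π j, j}`
units. Since `𝔪` is prime, for `i ≤ j` column `i` of `g` then vanishes mod `𝔪` below row `π j`,
and row `j` of `g⁻¹` vanishes mod `𝔪` left of column `π i`. So `π` is monotone, and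
`(g⁻¹ g)_{i i'} = 0` for `i < i'` makes it strictly monotone; hence `π = id`, which says that
`g` and `g⁻¹` lie in `𝔦`. Conversely `𝔦` is closed under multiplication.
-/

section UpperTriangularMod

variable {A : Type*} [CommSemiring A]

def upperTriangularMod (I : Ideal A) (n : ℕ) : Set (Matrix (Fin n) (Fin n) A) :=
  {M | ∀ i j : Fin n, j < i → M i j ∈ I}

theorem iw_eq_upperTriangularMod (n : ℕ) : iw R n = upperTriangularMod (maximalIdeal R) n := rfl

variable {I : Ideal A} {n : ℕ}

theorem mul_mem_upperTriangularMod {M N : Matrix (Fin n) (Fin n) A}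
    (hM : M ∈ upperTriangularMod I n) (hN : N ∈ upperTriangularMod I n) :
    M * N ∈ upperTriangularMod I n := by
  intro i j hji
  rw [Matrix.mul_apply]
  refine I.sum_mem fun k _ => ?_
  rcases lt_or_ge k i with hki | hik
  · exact I.mul_mem_right _ (hM i k hki)
  · exact I.mul_mem_left _ (hN k j (hji.trans_le hik))

theorem single_mem_upperTriangularMod {i j : Fin n} (hij : i ≤ j) (c : A) :
    Matrix.single i j c ∈ upperTriangularMod I n := by
  intro k l hlk
  have : ¬(i = k ∧ j = l) := by rintro ⟨rfl, rfl⟩; exact lt_irrefl _ (hij.trans_lt hlk)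
  simp only [Matrix.single, Matrix.of_apply, if_neg this, I.zero_mem]

end UpperTriangularMod

theorem Matrix.mul_single_mul_apply {A : Type*} [CommSemiring A] {n : Type*} [Fintype n]
    [DecidableEq n] (a b : Matrix n n A) (i j k l : n) (c : A) :
    (a * Matrix.single i j c * b) k l = a k i * c * b j l := by
  simp [Matrix.mul_apply, Matrix.single, ite_and, Finset.sum_ite_eq, mul_comm]

theorem Ideal.sum_mem_iff_of_forall_ne_mem {A ι : Type*} [Ring A] [Fintype ι] [DecidableEq ι]
    (I : Ideal A) (f : ι → A) (m : ι) (h : ∀ k ≠ m, f k ∈ I) :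
    ∑ k, f k ∈ I ↔ f m ∈ I := by
  rw [← Finset.add_sum_erase _ _ (Finset.mem_univ m)]
  exact I.add_mem_iff_left (I.sum_mem fun k hk => h k (Finset.ne_of_mem_erase hk))

theorem image_conj_eq_of_mem {M : Type*} [Monoid M] {S : Set M}
    (hS : ∀ x ∈ S, ∀ y ∈ S, x * y ∈ S) {g h : M} (hg : g ∈ S) (hh : h ∈ S)
    (hgh : g * h = 1) :
    (fun a => g * a * h) '' S = S := by
  refine Set.Subset.antisymm ?_ fun b hb => ⟨h * b * g, hS _ (hS _ hh _ hb) _ hg, ?_⟩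
  · rintro _ ⟨a, ha, rfl⟩
    exact hS _ (hS _ hg _ ha) _ hh
  · simp only [← mul_assoc, hgh, one_mul]
    rw [mul_assoc, hgh, mul_one]

section Pivot

variable {A : Type*} [CommRing A] {P : Ideal A} [P.IsPrime] {n : ℕ}
  {a b : Matrix (Fin n) (Fin n) A}

theorem exists_notMem_and_notMem_of_mul_eq_one (hba : b * a = 1) (j : Fin n) :
    ∃ k, b j k ∉ P ∧ a k j ∉ P := by
  by_contra! h
  have hdiag : ∑ k, b j k * a k j ∈ P :=
    P.sum_mem fun k _ => (em (b j k ∈ P)).elim (P.mul_mem_right _) (P.mul_mem_left _ ∘ h k)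
  rw [← Matrix.mul_apply, hba, Matrix.one_apply_eq] at hdiag
  exact Ideal.IsPrime.ne_top ‹_› ((Ideal.eq_top_iff_one _).2 hdiag)

theorem mem_upperTriangularMod_of_image_conj_subset (hba : b * a = 1)
    (hconj : (fun x => a * x * b) '' upperTriangularMod P n ⊆ upperTriangularMod P n) :
    a ∈ upperTriangularMod P n ∧ b ∈ upperTriangularMod P n := by
  have hprod : ∀ i j k l : Fin n, i ≤ j → l < k → a k i * b j l ∈ P := fun i j k l hij hlk => by
    simpa [Matrix.mul_single_mul_apply] using
      hconj ⟨_, single_mem_upperTriangularMod hij 1, rfl⟩ k l hlk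
  choose π hbπ haπ using exists_notMem_and_notMem_of_mul_eq_one (P := P) hba
  have col_le : ∀ {i j k}, i ≤ j → a k i ∉ P → k ≤ π j := fun hij hk => by
    by_contra! hlt
    exact (Ideal.IsPrime.mem_or_mem ‹_› (hprod _ _ _ _ hij hlt)).elim hk (hbπ _)
  have le_row : ∀ {i j l}, i ≤ j → b j l ∉ P → π i ≤ l := fun hij hl => by
    by_contra! hlt
    exact (Ideal.IsPrime.mem_or_mem ‹_› (hprod _ _ _ _ hij hlt)).elim (haπ _) hl
  have mono : Monotone π := fun i j hij => le_row hij (hbπ j)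
  have pivot_ne : ∀ {i i'}, i < i' → π i ≠ π i' := fun {i i'} hlt heq => by
    have hoff : ∑ k, b i k * a k i' ∈ P := by
      rw [← Matrix.mul_apply, hba, Matrix.one_apply_ne hlt.ne]
      exact P.zero_mem
    rw [Ideal.sum_mem_iff_of_forall_ne_mem P _ (π i') fun k hk => ?_] at hoff
    · exact (Ideal.IsPrime.mem_or_mem ‹_› hoff).elim (heq ▸ hbπ i) (haπ i')
    rcases hk.lt_or_gt with hk | hk
    · refine P.mul_mem_right _ (by_contra fun hb => ?_)
      exact (le_row le_rfl hb).not_gt (heq ▸ hk)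
    · refine P.mul_mem_left _ (by_contra fun ha => ?_)
      exact (col_le le_rfl ha).not_gt hk
  have hπ : π = id := StrictMono.eq_id fun i j hij => (mono hij.le).lt_of_ne (pivot_ne hij)
  refine ⟨fun k i hik => ?_, fun j l hlj => ?_⟩
  · by_contra hk
    exact (col_le le_rfl hk).not_gt (by simpa [hπ])
  · by_contra hl
    exact (le_row le_rfl hl).not_gt (by simpa [hπ])

end Pivot

theorem glR_normalizes_iwahori_iff (n : ℕ) (g ginv : Matrix (Fin n) (Fin n) R)
    (hg : g * ginv = 1) (hg' : ginv * g = 1) :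
    ((fun a => g * a * ginv) '' iw R n = iw R n) ↔ g ∈ Uiw R n := by
  rw [iw_eq_upperTriangularMod]
  constructor
  · intro hconj
    obtain ⟨hg_mem, hginv_mem⟩ := mem_upperTriangularMod_of_image_conj_subset hg' hconj.subset
    exact ⟨hg_mem, ginv, hginv_mem, hg, hg'⟩
  · rintro ⟨hg_mem, v, hv_mem, -, hvg⟩
    obtain rfl : v = ginv := left_inv_eq_right_inv hvg hg
    exact image_conj_eq_of_mem (fun _ hx _ hy => mul_mem_upperTriangularMod hx hy) hg_mem hv_mem hg
end

section
/- Let n ≥ 1 and let J be a compact subgroup of GLₙ(F) such that every g ∈ J satisfies g·𝔦·g⁻¹ = 𝔦 (as subsets of Matₙ(F)). Then J ⊆ U_𝔦. -/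
open IsLocalRing

variable (R : Type*) [CommRing R] [IsDomain R] [IsDiscreteValuationRing R]

variable (F : Type*) [Field F] [Algebra R F] [IsFractionRing R F]

/-! Write `h = g⁻¹` and write the valuation `v` additively. Conjugating the elements
`ϖ^{[i > j]} E_{ij}` of `𝔦` gives `v(g_{ai} h_{jb}) ≥ [a > b] - [i > j]`. Since
`∑_i g_{ai} h_{ia} = 1`, each row `a` has an entry `g_{a,σ(a)}` with
`v(g_{a,σ(a)}) + v(h_{σ(a),a}) = 0`; the bounds then force `σ` to be a permutation whose term
strictly dominates every other term of the Leibniz expansion of `det g`, so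
`v(det g) = ∑_a v(g_{a,σ(a)})`. As `J` is a compact group, `v ∘ det` is a bounded homomorphism on
`J`, hence zero. The bounds then make all `v(g_{a,σ(a)})` vanish and `σ` increasing, so
`a ≤ σ(a)` and `v(g_{ab}) ≥ [σ(a) > b] ≥ [a > b]`, i.e. `g ∈ 𝔦`; the same holds for `g⁻¹ ∈ J`. -/

open WithZero
open scoped Matrix Topology

namespace WithZero

theorem lt_one_iff_le_exp_neg_one {x : ℤᵐ⁰} : x < 1 ↔ x ≤ exp (-1) := by
  simpa using lt_mul_exp_iff_le (x := x) (y := exp (-1)) exp_ne_zero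

theorem exp_sum {κ : Type*} (s : Finset κ) (f : κ → ℤ) :
    exp (∑ i ∈ s, f i) = ∏ i ∈ s, (exp (f i) : ℤᵐ⁰) := by
  simp [exp, ofAdd_sum, ← WithZero.coeMonoidHom_apply]

theorem eq_one_of_forall_zpow_le {x γ : ℤᵐ⁰} (hx : x ≠ 0) (h : ∀ k : ℤ, x ^ k ≤ γ) : x = 1 := by
  have hγ : γ ≠ 0 := ne_of_gt (zero_lt_one.trans_le (by simpa using h 0))
  lift x to ℤ using hx with d
  lift γ to ℤ using hγ with c
  have key : ∀ k : ℤ, k * d ≤ c := fun k => by simpa [← exp_zsmul] using h k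
  have h₁ := key (|c| + 1)
  have h₂ := key (-(|c| + 1))
  rw [exp_eq_one]
  rcases lt_trichotomy d 0 with hd | hd | hd
  · nlinarith [le_abs_self c]
  · exact hd
  · nlinarith [le_abs_self c]

end WithZero

theorem Equiv.Perm.exists_apply_lt_of_ne_one {ι : Type*} [LinearOrder ι] [Finite ι]
    {ρ : Equiv.Perm ι} (hρ : ρ ≠ 1) : ∃ i, ρ i < i := by
  by_contra! hle
  refine hρ (Equiv.ext fun i => ?_)
  induction i using WellFoundedGT.induction with
  | _ i ih =>
    refine ((hle i).lt_or_eq.resolve_left fun hlt => hlt.ne' (ρ.injective ?_)).symm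
    simpa using ih _ hlt

theorem Valuation.map_units_int_smul {K Γ₀ : Type*} [Ring K] [LinearOrderedCommMonoidWithZero Γ₀]
    (v : Valuation K Γ₀) (ε : ℤˣ) (x : K) : v (ε • x) = v x := by
  rcases Int.units_eq_one_or ε with rfl | rfl <;> simp

namespace IwahoriOrder

section Combinatorics

variable {ι : Type*} [LinearOrder ι]

def subdiag (i j : ι) : ℤ := if j < i then 1 else 0

theorem subdiag_of_lt {i j : ι} (h : j < i) : subdiag i j = 1 := if_pos h

theorem subdiag_of_le {i j : ι} (h : i ≤ j) : subdiag i j = 0 := if_neg h.not_gt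

@[simp] theorem subdiag_self (i : ι) : subdiag i i = 0 := subdiag_of_le le_rfl

theorem subdiag_nonneg (i j : ι) : 0 ≤ subdiag i j := by
  unfold subdiag; split_ifs <;> norm_num

theorem subdiag_le_one (i j : ι) : subdiag i j ≤ 1 := by
  unfold subdiag; split_ifs <;> norm_num

theorem subdiag_mono {i i' : ι} (h : i ≤ i') (j : ι) : subdiag i j ≤ subdiag i' j := by
  unfold subdiag; split_ifs with h₁ h₂ <;> first | exact absurd (h₁.trans_le h) h₂ | norm_num

variable {σ : ι → ι} {t : ι → ℤ}

theorem injective_of_sub_le_subdiag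
    (hI : ∀ a a', t a - t a' ≤ subdiag (σ a) (σ a') - subdiag a a') : Function.Injective σ := by
  intro a a' h
  have h₁ := hI a a'
  have h₂ := hI a' a
  rw [h, subdiag_self] at h₁ h₂
  by_contra hne
  rcases lt_or_gt_of_ne hne with hlt | hlt
  · have := subdiag_of_lt hlt; have := subdiag_nonneg a a'; omega
  · have := subdiag_of_lt hlt; have := subdiag_nonneg a' a; omega

theorem strictMono_of_sub_le_subdiag
    (hI : ∀ a a', t a - t a' ≤ subdiag (σ a) (σ a') - subdiag a a') (ht : ∀ a, t a = 0) :
    StrictMono σ := by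
  intro a a' hlt
  have h := hI a' a
  rw [ht, ht, subdiag_of_lt hlt] at h
  by_contra hle
  rw [subdiag_of_le (not_lt.mp hle)] at h
  omega

end Combinatorics

theorem eq_zero_of_sum_eq_zero_of_le_add_one {κ : Type*} [Fintype κ] {t : κ → ℤ}
    (hgap : ∀ a b, t a ≤ t b + 1) (hsum : ∑ a, t a = 0) (a : κ) : t a = 0 := by
  by_contra hne
  rcases lt_or_gt_of_ne hne with hneg | hpos
  · have : ∑ b, t b < ∑ _b : κ, (0 : ℤ) :=
      Finset.sum_lt_sum (fun b _ => by linarith [hgap b a]) ⟨a, Finset.mem_univ a, hneg⟩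
    simp_all
  · have : ∑ _b : κ, (0 : ℤ) < ∑ b, t b :=
      Finset.sum_lt_sum (fun b _ => by linarith [hgap a b]) ⟨a, Finset.mem_univ a, hpos⟩
    simp_all

section RowSum

variable {ι K : Type*} [Fintype ι] [DecidableEq ι] [Field K] {v : Valuation K ℤᵐ⁰}

theorem exists_valuation_mul_eq_one {g h : Matrix ι ι K} (hgh : g * h = 1)
    (hle : ∀ a i, v (g a i * h i a) ≤ 1) (a : ι) : ∃ i, v (g a i * h i a) = 1 := by
  by_contra! hne
  have hsum : ∑ i, g a i * h i a = 1 := by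
    simpa [Matrix.mul_apply] using congrFun (congrFun hgh a) a
  have := v.map_sum_lt (s := Finset.univ) one_ne_zero fun i _ => (hle a i).lt_of_ne (hne i)
  simp [hsum] at this

end RowSum

section Valuation

variable {ι K : Type*} [LinearOrder ι] [Field K] (v : Valuation K ℤᵐ⁰)

/-- The Iwahori order `𝔦`, in the multiplicative convention `v ϖ = exp (-1)`: the condition
says `M i j ∈ 𝒪` on and above the diagonal and `M i j ∈ ϖ𝒪` below it. -/
def iwahori : Set (Matrix ι ι K) := {M | ∀ i j, v (M i j) ≤ exp (-subdiag i j)}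

variable {v} in
theorem valuation_le_one_of_mem_iwahori {M : Matrix ι ι K} (hM : M ∈ iwahori v) (i j : ι) :
    v (M i j) ≤ 1 :=
  (hM i j).trans (exp_zero (M := ℤ) ▸ exp_le_exp.2 (neg_nonpos.2 (subdiag_nonneg i j)))

variable [Fintype ι]

def MapsIwahori (g h : Matrix ι ι K) : Prop := ∀ E ∈ iwahori v, g * E * h ∈ iwahori v

variable {v}

theorem MapsIwahori.valuation_mul_le {π : K} (hπ : v π = exp (-1)) {g h : Matrix ι ι K}
    (hgh : MapsIwahori v g h) (a i j b : ι) :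
    v (g a i * h j b) ≤ exp (subdiag i j - subdiag a b) := by
  have hvπ : v (π ^ subdiag i j) = exp (-subdiag i j) := by
    rw [map_zpow₀, hπ, ← exp_zsmul]; simp
  have hE : Matrix.single i j (π ^ subdiag i j) ∈ iwahori v := by
    intro p q
    by_cases hpq : i = p ∧ j = q
    · obtain ⟨rfl, rfl⟩ := hpq; simp [hvπ]
    · simp [Matrix.single, hpq]
  have hentry := hgh _ hE a b
  have hsingle : (g * Matrix.single i j (π ^ subdiag i j) * h) a b =
      g a i * h j b * π ^ subdiag i j := by
    simp [Matrix.mul_apply, Matrix.single, ite_and]; ring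
  rw [hsingle, map_mul, hvπ] at hentry
  calc v (g a i * h j b) = v (g a i * h j b) * exp (-subdiag i j) * exp (subdiag i j) := by
        rw [mul_assoc, ← exp_add, neg_add_cancel, exp_zero, mul_one]
    _ ≤ exp (-subdiag a b) * exp (subdiag i j) := by gcongr
    _ = exp (subdiag i j - subdiag a b) := by rw [← exp_add]; ring_nf

theorem valuation_det_eq {g : Matrix ι ι K} (σ : Equiv.Perm ι) (t : ι → ℤ)
    (hdiag : ∀ a, v (g a (σ a)) = exp (t a))
    (hle : ∀ a b, v (g a b) ≤ exp (t a - subdiag (σ a) b)) :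
    v g.det = exp (∑ a, t a) := by
  rw [← Matrix.det_transpose, Matrix.det_apply, ← Finset.add_sum_erase _ _ (Finset.mem_univ σ)]
  have hmain : v (Equiv.Perm.sign σ • ∏ i, gᵀ (σ i) i) = exp (∑ a, t a) := by
    simp only [Matrix.transpose_apply, v.map_units_int_smul, map_prod, hdiag, exp_sum]
  have hrest : ∀ τ ∈ Finset.univ.erase σ,
      v (Equiv.Perm.sign τ • ∏ i, gᵀ (τ i) i) < exp (∑ a, t a) := by
    intro τ hτ
    -- some row `k = σ⁻¹ j` has `τ k < σ k`, which costs a factor `ϖ`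
    obtain ⟨j, hj⟩ := Equiv.Perm.exists_apply_lt_of_ne_one (ρ := τ * σ⁻¹)
      (by simpa [mul_inv_eq_one] using Finset.ne_of_mem_erase hτ)
    have hjump : subdiag (σ (σ⁻¹ j)) (τ (σ⁻¹ j)) = 1 := subdiag_of_lt (by simpa using hj)
    rw [v.map_units_int_smul, map_prod]
    calc ∏ k, v (gᵀ (τ k) k) ≤ ∏ k, exp (t k - subdiag (σ k) (τ k)) :=
          Finset.prod_le_prod' fun k _ => hle k (τ k)
      _ = exp (∑ k, t k - ∑ k, subdiag (σ k) (τ k)) := by rw [← Finset.sum_sub_distrib, exp_sum]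
      _ < exp (∑ k, t k) := by
          rw [exp_lt_exp, sub_lt_self_iff]
          calc (0 : ℤ) < subdiag (σ (σ⁻¹ j)) (τ (σ⁻¹ j)) := hjump ▸ one_pos
            _ ≤ ∑ k, subdiag (σ k) (τ k) :=
              Finset.single_le_sum (fun k _ => subdiag_nonneg _ _) (Finset.mem_univ _)
  rw [v.map_add_eq_of_lt_left ((v.map_sum_lt exp_ne_zero hrest).trans_eq hmain.symm), hmain]

theorem exists_dominant_entries {π : K} (hπ : v π = exp (-1)) {g h : Matrix ι ι K}
    (hgh : g * h = 1) (hg : MapsIwahori v g h) (hh : MapsIwahori v h g) :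
    ∃ (σ : ι → ι) (t : ι → ℤ), (∀ a, v (g a (σ a)) = exp (t a)) ∧
      (∀ a b, v (g a b) ≤ exp (t a - subdiag (σ a) b)) ∧
      ∀ a a', t a - t a' ≤ subdiag (σ a) (σ a') - subdiag a a' := by
  choose σ hσ using exists_valuation_mul_eq_one hgh fun a i => by
    simpa using hg.valuation_mul_le hπ a i i a
  have hne : ∀ a, v (g a (σ a)) ≠ 0 := fun a h0 => by simpa [h0] using hσ a
  have hgσ : ∀ a, v (g a (σ a)) = exp (log (v (g a (σ a)))) := fun a => (exp_log (hne a)).symm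
  have hhσ : ∀ a, v (h (σ a) a) = exp (-log (v (g a (σ a)))) := fun a => by
    rw [exp_neg, ← hgσ]
    exact eq_inv_of_mul_eq_one_right (by rw [← map_mul, hσ])
  refine ⟨σ, fun a => log (v (g a (σ a))), hgσ, fun a b => ?_, fun a a' => ?_⟩
  · have := hh.valuation_mul_le hπ (σ a) a a b
    rw [map_mul, hhσ, subdiag_self, zero_sub, exp_neg,
      inv_mul_le_iff₀ (zero_lt_iff.2 exp_ne_zero), ← exp_add] at this
    simpa [sub_eq_add_neg] using this
  · have := hg.valuation_mul_le hπ a (σ a) (σ a') a'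
    rwa [map_mul, hgσ, hhσ, ← exp_add, exp_le_exp, ← sub_eq_add_neg] at this

theorem mem_iwahori_of_valuation_det_eq_one {π : K} (hπ : v π = exp (-1)) {g h : Matrix ι ι K}
    (hgh : g * h = 1) (hg : MapsIwahori v g h) (hh : MapsIwahori v h g) (hdet : v g.det = 1) :
    g ∈ iwahori v := by
  obtain ⟨σ, t, hdiag, hle, hI⟩ := exists_dominant_entries hπ hgh hg hh
  have hσ : Function.Bijective σ :=
    Finite.injective_iff_bijective.mp (injective_of_sub_le_subdiag hI)
  have hsum : ∑ a, t a = 0 := by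
    rwa [valuation_det_eq (Equiv.ofBijective σ hσ) t hdiag hle, exp_eq_one] at hdet
  have ht : ∀ a, t a = 0 := eq_zero_of_sum_eq_zero_of_le_add_one
    (fun a a' => by linarith [hI a a', subdiag_le_one (σ a) (σ a'), subdiag_nonneg a a']) hsum
  have hmono := strictMono_of_sub_le_subdiag hI ht
  intro a b
  calc v (g a b) ≤ exp (t a - subdiag (σ a) b) := hle a b
    _ ≤ exp (-subdiag a b) := by
        rw [ht, zero_sub, exp_le_exp, neg_le_neg_iff]
        exact subdiag_mono hmono.le_apply b

end Valuation

section Compact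

variable {K : Type*} [Field K] [TopologicalSpace K] [IsTopologicalRing K] {v : Valuation K ℤᵐ⁰}

theorem exists_valuation_le_of_isCompact (hv : {x : K | v x ≤ 1} ∈ 𝓝 0) {S : Set K}
    (hS : IsCompact S) : ∃ γ, ∀ x ∈ S, v x ≤ γ := by
  have hopen : ∀ γ, IsOpen (v.leAddSubgroup (max 1 γ) : Set K) := fun γ =>
    AddSubgroup.isOpen_mono (v.leAddSubgroup_monotone (le_max_left 1 γ))
      ((v.leAddSubgroup 1).isOpen_of_mem_nhds hv)
  obtain ⟨γ, hγ⟩ := hS.elim_directed_cover (fun γ => (v.leAddSubgroup (max 1 γ) : Set K)) hopen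
    (fun x _ => Set.mem_iUnion.2 ⟨v x, v.mem_leAddSubgroup_iff.2 (le_max_right _ _)⟩)
    (Monotone.directed_le fun γ γ' h => v.leAddSubgroup_monotone (max_le_max_left 1 h))
  exact ⟨max 1 γ, fun x hx => v.mem_leAddSubgroup_iff.1 (hγ hx)⟩

theorem valuation_det_eq_one_of_isCompact {ι : Type*} [Fintype ι] [DecidableEq ι]
    (hv : {x : K | v x ≤ 1} ∈ 𝓝 0) {J : Subgroup (GL ι K)} (hJ : IsCompact (J : Set (GL ι K)))
    {g : GL ι K} (hg : g ∈ J) : v (g : Matrix ι ι K).det = 1 := by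
  have hcont : Continuous fun g : GL ι K => (g : Matrix ι ι K).det :=
    Units.continuous_val.matrix_det
  obtain ⟨γ, hγ⟩ := exists_valuation_le_of_isCompact hv (hJ.image hcont)
  have hpow : ∀ k : ℤ, ((g ^ k : GL ι K) : Matrix ι ι K).det = (g : Matrix ι ι K).det ^ k :=
    fun k => by
      simp only [← Matrix.GeneralLinearGroup.val_det_apply, map_zpow, Units.val_zpow_eq_zpow_val]
  refine eq_one_of_forall_zpow_le (γ := γ) ((map_ne_zero v).2 ?_) fun k => ?_
  · rw [← Matrix.GeneralLinearGroup.val_det_apply]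
    exact Units.ne_zero _
  · rw [← map_zpow₀, ← hpow]
    exact hγ _ ⟨g ^ k, zpow_mem hg k, rfl⟩

end Compact

section DiscreteValuationRing

open IsDedekindDomain.HeightOneSpectrum

variable {R F}

theorem valuation_algebraMap_le_exp_neg_one_iff {r : R} :
    (IsDiscreteValuationRing.maximalIdeal R).valuation F (algebraMap R F r) ≤ exp (-1) ↔
      r ∈ maximalIdeal R := by
  rw [← lt_one_iff_le_exp_neg_one]
  exact valuation_lt_one_iff_mem _ r

theorem image_map_iw_eq_iwahori (n : ℕ) :
    (fun M : Matrix (Fin n) (Fin n) R => M.map (algebraMap R F)) '' iw R n =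
      iwahori ((IsDiscreteValuationRing.maximalIdeal R).valuation F) := by
  ext M
  constructor
  · rintro ⟨N, hN, rfl⟩ i j
    rcases lt_or_ge j i with hji | hij
    · rw [subdiag_of_lt hji]
      exact valuation_algebraMap_le_exp_neg_one_iff.2 (hN i j hji)
    · rw [subdiag_of_le hij, neg_zero, exp_zero]
      exact valuation_le_one _ _
  · intro hM
    choose N hN using fun i j =>
      IsDiscreteValuationRing.exists_lift_of_le_one (valuation_le_one_of_mem_iwahori hM i j)
    refine ⟨Matrix.of N, fun i j hji => ?_, Matrix.ext hN⟩
    rw [← valuation_algebraMap_le_exp_neg_one_iff (F := F), Matrix.of_apply, hN,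
      ← subdiag_of_lt (show j < i from hji)]
    exact hM i j

theorem exists_mem_Uiw_of_mem_iwahori {n : ℕ} {g : GL (Fin n) F}
    (hg : (g : Matrix (Fin n) (Fin n) F) ∈
      iwahori ((IsDiscreteValuationRing.maximalIdeal R).valuation F))
    (hg' : ((g⁻¹ : GL (Fin n) F) : Matrix (Fin n) (Fin n) F) ∈
      iwahori ((IsDiscreteValuationRing.maximalIdeal R).valuation F)) :
    ∃ u ∈ Uiw R n, (g : Matrix (Fin n) (Fin n) F) = u.map (algebraMap R F) := by
  rw [← image_map_iw_eq_iwahori] at hg hg'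
  obtain ⟨U, hU, hUg⟩ := hg
  obtain ⟨V, hV, hVg⟩ := hg'
  have hinj := Matrix.map_injective (m := Fin n) (n := Fin n) (IsFractionRing.injective R F)
  refine ⟨U, ⟨hU, V, hV, hinj ?_, hinj ?_⟩, hUg.symm⟩
  · simp only [Matrix.map_mul, hUg, hVg, Units.mul_inv, Matrix.map_one _ (map_zero _) (map_one _)]
  · simp only [Matrix.map_mul, hUg, hVg, Units.inv_mul, Matrix.map_one _ (map_zero _) (map_one _)]

end DiscreteValuationRing

end IwahoriOrder

open IsDedekindDomain.HeightOneSpectrum IwahoriOrder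

theorem compact_subgroup_normalizing_iwahori_subset_units
    [TopologicalSpace F] [IsTopologicalRing F]
    (ϖ : R)
    (hbasis : (nhds (0 : F)).HasBasis (fun _ : ℤ => True)
      (fun m => {x : F | ∃ r : R, x = (algebraMap R F ϖ) ^ m * algebraMap R F r}))
    (n : ℕ)
    (J : Subgroup (GL (Fin n) F)) (hJcompact : IsCompact (J : Set (GL (Fin n) F)))
    (hJnorm : ∀ g ∈ J,
      (fun a => (g : Matrix (Fin n) (Fin n) F) * a *
            ((g⁻¹ : GL (Fin n) F) : Matrix (Fin n) (Fin n) F)) ''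
          ((fun M : Matrix (Fin n) (Fin n) R => M.map (algebraMap R F)) '' iw R n) =
        (fun M : Matrix (Fin n) (Fin n) R => M.map (algebraMap R F)) '' iw R n) :
    ∀ g ∈ J, ∃ u ∈ Uiw R n,
      (g : Matrix (Fin n) (Fin n) F) = u.map (algebraMap R F) := by
  set v := (IsDiscreteValuationRing.maximalIdeal R).valuation F
  obtain ⟨π, hπ⟩ := valuation_exists_uniformizer F (IsDiscreteValuationRing.maximalIdeal R)
  have hv : {x : F | v x ≤ 1} ∈ 𝓝 0 :=
    Filter.mem_of_superset (hbasis.mem_of_mem (i := 0) trivial)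
      (by rintro _ ⟨r, rfl⟩; simpa using valuation_le_one _ r)
  rw [image_map_iw_eq_iwahori] at hJnorm
  have hmaps : ∀ g ∈ J, MapsIwahori v (g : Matrix (Fin n) (Fin n) F) ↑g⁻¹ :=
    fun g hg E hE => hJnorm g hg ▸ ⟨E, hE, rfl⟩
  have hmem : ∀ g ∈ J, (g : Matrix (Fin n) (Fin n) F) ∈ iwahori v := fun g hg =>
    mem_iwahori_of_valuation_det_eq_one hπ g.mul_inv (hmaps g hg)
      (by simpa using hmaps g⁻¹ (inv_mem hg)) (valuation_det_eq_one_of_isCompact hv hJcompact hg)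
  exact fun g hg => exists_mem_Uiw_of_mem_iwahori (hmem g hg) (hmem g⁻¹ (inv_mem hg))
end

section
/- Let ψ : F → ℂˣ be a group homomorphism from the additive group of F to the multiplicative group of nonzero complex numbers such that ψ(y) = 1 for all y ∈ 𝔪 (viewing 𝔪 ⊆ R ⊆ F). Let S be the set of all 2×2 matrices over F of the form a·1 + x, where a ∈ Rˣ and x = (x₁₁, x₁₂; x₂₁, x₂₂) satisfies x₁₁, x₂₁, x₂₂ ∈ 𝔪 and x₁₂ ∈ R. Then: (i) every element of S is invertible and S is a subgroup of GL₂(F); (ii) the formula θ₁(a·1 + x) = ψ(a⁻¹·(ϖ⁻¹·x₂₁ + x₁₂)) gives a well-defined map on S (its value does not depend on the chosen decomposition a·1 + x) and θ₁ : S → ℂˣ is a group homomorphism; (iii) likewise, the formula θ₂(a·1 + x) = ψ(a⁻¹·ϖ⁻¹·x₂₁) gives a well-defined group homomorphism θ₂ : S → ℂˣ. -/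
open IsLocalRing

variable (R : Type*) [CommRing R] [IsDomain R] [IsDiscreteValuationRing R]
variable (F : Type*) [Field F] [Algebra R F] [IsFractionRing R F]

/-- The condition on the "small" part `x` of a decomposition `a·1 + x`:
`x₁₁, x₂₁, x₂₂ ∈ 𝔪` and `x₁₂ ∈ R`. -/
def SmallPart (x : Matrix (Fin 2) (Fin 2) F) : Prop :=
  (∃ r ∈ maximalIdeal R, x 0 0 = algebraMap R F r) ∧
  (∃ r : R, x 0 1 = algebraMap R F r) ∧
  (∃ r ∈ maximalIdeal R, x 1 0 = algebraMap R F r) ∧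
  (∃ r ∈ maximalIdeal R, x 1 1 = algebraMap R F r)

/-- The set `S` of matrices of the form `a·1 + x` with `a ∈ Rˣ` and `x` as above. -/
def Sgrp : Set (Matrix (Fin 2) (Fin 2) F) :=
  {M | ∃ a : Rˣ, ∃ x : Matrix (Fin 2) (Fin 2) F, SmallPart R F x ∧
    M = algebraMap R F (a : R) • (1 : Matrix (Fin 2) (Fin 2) F) + x}


/-!
The conditions on `x` say that `x` lies in the Jacobson radical `𝔓 = (𝔪 R; 𝔪 𝔪)` of the standard
Iwahori order. Since `𝔓` is closed under sums, products and `R`-multiples, `S = Rˣ·(1 + 𝔓)` is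
closed under products, and the adjugate formula `(a + x)⁻¹ = det⁻¹ • ((a + tr x) - x)` shows that it
is closed under inverses. The form `ℓ(x) = ϖ⁻¹ x₂₁ + k x₁₂ = tr(β x)` maps `𝔓` into `R` and `𝔓²`
into `𝔪`, where `ψ` is trivial. Hence `ψ(a⁻¹ ℓ(x))` only depends on `a` modulo `𝔪`, which makes
`θ` well defined, and `(ab)⁻¹ ℓ(ay + bx + xy) = a⁻¹ ℓ(x) + b⁻¹ ℓ(y) + (ab)⁻¹ ℓ(xy)` makes it
multiplicative.
-/

open IsLocalization Matrix

namespace Iwahori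

section Algebra

variable {A S : Type*} [CommRing A] [CommRing S] [Algebra A S] {I : Ideal A}

variable (I) in
theorem coeSubmodule_le_one : coeSubmodule S I ≤ 1 := by
  simpa using coeSubmodule_mono S (le_top : I ≤ ⊤)

theorem mul_mem_coeSubmodule_of_mem_one_left {a m : S} (ha : a ∈ (1 : Submodule A S))
    (hm : m ∈ coeSubmodule S I) : a * m ∈ coeSubmodule S I := by
  simpa using Submodule.mul_mem_mul ha hm

theorem mul_mem_coeSubmodule_of_mem_one_right {m a : S} (hm : m ∈ coeSubmodule S I)
    (ha : a ∈ (1 : Submodule A S)) : m * a ∈ coeSubmodule S I := by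
  simpa using Submodule.mul_mem_mul hm ha

theorem eq_of_sub_mem_coeSubmodule {G : Type*} [Monoid G] {ψ : S → G}
    (hψadd : ∀ x y : S, ψ (x + y) = ψ x * ψ y) (hψI : ∀ r ∈ I, ψ (algebraMap A S r) = 1)
    {x y : S} (h : x - y ∈ coeSubmodule S I) : ψ x = ψ y := by
  obtain ⟨r, hr, hrxy⟩ := (mem_coeSubmodule S I).1 h
  rw [← sub_add_cancel x y, hψadd, ← hrxy, hψI r hr, one_mul]

theorem exists_units_algebraMap_eq_of_sub_mem [IsLocalRing A] (u : Aˣ) {z : S}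
    (h : z - algebraMap A S u ∈ coeSubmodule S (maximalIdeal A)) :
    ∃ v : Aˣ, algebraMap A S v = z := by
  obtain ⟨m, hm, hmz⟩ := (mem_coeSubmodule S _).1 h
  have hunit : IsUnit ((u : A) + m) := by
    rw [← notMem_maximalIdeal]
    intro hum
    exact notMem_maximalIdeal.2 u.isUnit (by simpa using sub_mem hum hm)
  exact ⟨hunit.unit, by rw [IsUnit.unit_spec, map_add, hmz, add_sub_cancel]⟩

end Algebra

theorem smul_one_add_mul_smul_one_add {K M : Type*} [CommRing K] [Ring M] [Algebra K M]
    (a b : K) (x y : M) : (a • 1 + x) * (b • 1 + y) = (a * b) • 1 + (a • y + b • x + x * y) := by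
  simp only [add_mul, mul_add, one_mul, mul_one, smul_mul_assoc, mul_smul_comm, smul_add,
    smul_smul, mul_comm b a]
  abel

theorem adjugate_smul_one_add {K : Type*} [CommRing K] (c : K) (x : Matrix (Fin 2) (Fin 2) K) :
    adjugate (c • 1 + x) = (c + x.trace) • 1 - x := by
  ext i j
  fin_cases i <;> fin_cases j <;> simp [adjugate_fin_two, trace_fin_two] <;> ring

section Field

variable {A K : Type*} [CommRing A] [Field K] [Algebra A K]

theorem inv_mul_mem_one_of_span_singleton_eq {ϖ : A} {I : Ideal A} (hϖ : Ideal.span {ϖ} = I)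
    {m : K} (hm : m ∈ coeSubmodule K I) : (algebraMap A K ϖ)⁻¹ * m ∈ (1 : Submodule A K) := by
  obtain ⟨r, hr, rfl⟩ := (mem_coeSubmodule K I).1 hm
  obtain ⟨s, rfl⟩ := Ideal.mem_span_singleton'.1 (hϖ ▸ hr)
  by_cases hϖ0 : algebraMap A K ϖ = 0
  · simp [hϖ0]
  · rw [map_mul, mul_comm, mul_inv_cancel_right₀ hϖ0]
    exact Submodule.algebraMap_mem s

variable (K) in
/-- `x ↦ tr(β x)` for `β = (0, ϖ⁻¹; k, 0)`; `k = 1` and `k = 0` give the `β₁` and `β₂` of the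
paper. -/
def traceForm (ϖ k : A) : Matrix (Fin 2) (Fin 2) K →ₗ[K] K where
  toFun x := (algebraMap A K ϖ)⁻¹ * x 1 0 + algebraMap A K k * x 0 1
  map_add' x y := by simp only [Matrix.add_apply]; ring
  map_smul' c x := by simp only [Matrix.smul_apply, smul_eq_mul, RingHom.id_apply]; ring

theorem traceForm_apply (ϖ k : A) (x : Matrix (Fin 2) (Fin 2) K) :
    traceForm K ϖ k x = (algebraMap A K ϖ)⁻¹ * x 1 0 + algebraMap A K k * x 0 1 :=
  rfl

theorem traceForm_smul_one (ϖ k : A) (c : K) : traceForm K ϖ k (c • 1) = 0 := by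
  simp [traceForm_apply]

theorem algebraMap_smul_one_add_mul (a b : Aˣ) (x y : Matrix (Fin 2) (Fin 2) K) :
    (algebraMap A K a • 1 + x) * (algebraMap A K b • 1 + y) =
      algebraMap A K ↑(a * b) • 1 + ((a : A) • y + (b : A) • x + x * y) := by
  rw [smul_one_add_mul_smul_one_add, algebraMap_smul K (a : A) y, algebraMap_smul K (b : A) x,
    Units.val_mul, map_mul]

variable [IsLocalRing A]

local notation "𝔪K" => coeSubmodule K (maximalIdeal A)

theorem inv_add_sub_inv_mem (u : Aˣ) {m : K} (hm : m ∈ 𝔪K) :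
    (algebraMap A K u + m)⁻¹ - (algebraMap A K u)⁻¹ ∈ 𝔪K := by
  obtain ⟨v, hv⟩ := exists_units_algebraMap_eq_of_sub_mem u (z := algebraMap A K u + m)
    (by simpa using hm)
  have hne (w : Aˣ) : algebraMap A K w ≠ 0 := (w.isUnit.map (algebraMap A K)).ne_zero
  have hinv (w : Aˣ) : (algebraMap A K w)⁻¹ ∈ (1 : Submodule A K) := by
    rw [← map_units_inv]; exact Submodule.algebraMap_mem _
  have hdiff : algebraMap A K u - algebraMap A K v = -m := by rw [hv]; ring
  rw [← hv, inv_sub_inv' (hne v) (hne u), hdiff]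
  exact mul_mem_coeSubmodule_of_mem_one_right
    (mul_mem_coeSubmodule_of_mem_one_left (hinv v) (neg_mem hm)) (hinv u)

variable (A K) in
/-- The Jacobson radical `𝔓 = (𝔪 R; 𝔪 𝔪)` of the Iwahori order `(R R; 𝔪 R)`. -/
def iwahoriRadical : NonUnitalSubalgebra A (Matrix (Fin 2) (Fin 2) K) where
  carrier := {x | x 0 0 ∈ 𝔪K ∧ x 0 1 ∈ (1 : Submodule A K) ∧ x 1 0 ∈ 𝔪K ∧ x 1 1 ∈ 𝔪K}
  zero_mem' := ⟨zero_mem _, zero_mem _, zero_mem _, zero_mem _⟩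
  add_mem' := by
    rintro x y ⟨hx00, hx01, hx10, hx11⟩ ⟨hy00, hy01, hy10, hy11⟩
    exact ⟨add_mem hx00 hy00, add_mem hx01 hy01, add_mem hx10 hy10, add_mem hx11 hy11⟩
  smul_mem' := by
    rintro r x ⟨hx00, hx01, hx10, hx11⟩
    exact ⟨Submodule.smul_mem _ r hx00, Submodule.smul_mem _ r hx01,
      Submodule.smul_mem _ r hx10, Submodule.smul_mem _ r hx11⟩
  mul_mem' := by
    rintro x y ⟨hx00, hx01, hx10, hx11⟩ ⟨hy00, hy01, hy10, hy11⟩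
    have hle := coeSubmodule_le_one (S := K) (maximalIdeal A)
    simp only [Set.mem_ofPred_eq, mul_apply, Fin.sum_univ_two]
    exact ⟨add_mem (mul_mem_coeSubmodule_of_mem_one_right hx00 (hle hy00))
        (mul_mem_coeSubmodule_of_mem_one_left hx01 hy10),
      add_mem (hle (mul_mem_coeSubmodule_of_mem_one_right hx00 hy01))
        (hle (mul_mem_coeSubmodule_of_mem_one_left hx01 hy11)),
      add_mem (mul_mem_coeSubmodule_of_mem_one_right hx10 (hle hy00))
        (mul_mem_coeSubmodule_of_mem_one_right hx11 (hle hy10)),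
      add_mem (mul_mem_coeSubmodule_of_mem_one_right hx10 hy01)
        (mul_mem_coeSubmodule_of_mem_one_right hx11 (hle hy11))⟩

theorem mem_iwahoriRadical {x : Matrix (Fin 2) (Fin 2) K} :
    x ∈ iwahoriRadical A K ↔
      x 0 0 ∈ 𝔪K ∧ x 0 1 ∈ (1 : Submodule A K) ∧ x 1 0 ∈ 𝔪K ∧ x 1 1 ∈ 𝔪K :=
  Iff.rfl

theorem trace_mem {x : Matrix (Fin 2) (Fin 2) K} (hx : x ∈ iwahoriRadical A K) : x.trace ∈ 𝔪K := by
  rw [trace_fin_two]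
  exact add_mem hx.1 hx.2.2.2

theorem exists_units_algebraMap_eq_det (a : Aˣ) {x : Matrix (Fin 2) (Fin 2) K}
    (hx : x ∈ iwahoriRadical A K) :
    ∃ d : Aˣ, algebraMap A K d = (algebraMap A K a • 1 + x).det := by
  obtain ⟨hx00, hx01, hx10, hx11⟩ := hx
  apply exists_units_algebraMap_eq_of_sub_mem (a * a)
  set u := algebraMap A K a
  have hu : u ∈ (1 : Submodule A K) := Submodule.algebraMap_mem _
  have hdet : (u • 1 + x).det - algebraMap A K ↑(a * a) =
      u * x 1 1 + x 0 0 * (u + x 1 1) - x 0 1 * x 1 0 := by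
    simp only [det_fin_two, Matrix.add_apply, Matrix.smul_apply, one_apply_eq, smul_eq_mul,
      one_apply_ne zero_ne_one, one_apply_ne one_ne_zero, mul_one, mul_zero, zero_add,
      Units.val_mul, map_mul, u]
    ring
  rw [hdet]
  exact sub_mem (add_mem (mul_mem_coeSubmodule_of_mem_one_left hu hx11)
    (mul_mem_coeSubmodule_of_mem_one_right hx00 (add_mem hu (coeSubmodule_le_one _ hx11))))
    (mul_mem_coeSubmodule_of_mem_one_left hx01 hx10)

theorem smul_add_smul_add_mul_mem (a b : A) {x y : Matrix (Fin 2) (Fin 2) K}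
    (hx : x ∈ iwahoriRadical A K) (hy : y ∈ iwahoriRadical A K) :
    a • y + b • x + x * y ∈ iwahoriRadical A K :=
  add_mem (add_mem (SMulMemClass.smul_mem a hy) (SMulMemClass.smul_mem b hx)) (mul_mem hx hy)

variable (A K) in
def unitsMulPrincipalUnits : Submonoid (Matrix (Fin 2) (Fin 2) K) where
  carrier := {M | ∃ a : Aˣ, ∃ x ∈ iwahoriRadical A K, M = algebraMap A K a • 1 + x}
  one_mem' := ⟨1, 0, zero_mem _, by rw [Units.val_one, map_one, one_smul, add_zero]⟩
  mul_mem' := by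
    rintro _ _ ⟨a, x, hx, rfl⟩ ⟨b, y, hy, rfl⟩
    exact ⟨a * b, (a : A) • y + (b : A) • x + x * y,
      smul_add_smul_add_mul_mem (a : A) (b : A) hx hy, algebraMap_smul_one_add_mul a b x y⟩

theorem exists_mul_eq_one {M : Matrix (Fin 2) (Fin 2) K} (hM : M ∈ unitsMulPrincipalUnits A K) :
    ∃ N ∈ unitsMulPrincipalUnits A K, M * N = 1 ∧ N * M = 1 := by
  obtain ⟨a, x, hx, rfl⟩ := hM
  obtain ⟨d, hd⟩ := exists_units_algebraMap_eq_det a hx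
  obtain ⟨c, hc⟩ := exists_units_algebraMap_eq_of_sub_mem a
    (z := algebraMap A K a + x.trace) (by simpa using trace_mem hx)
  have hdd : algebraMap A K ↑d⁻¹ * (algebraMap A K a • 1 + x).det = 1 := by
    rw [← hd, ← map_mul, Units.inv_mul, map_one]
  refine ⟨algebraMap A K ↑d⁻¹ • adjugate (algebraMap A K a • 1 + x),
    ⟨d⁻¹ * c, (↑d⁻¹ : A) • -x, SMulMemClass.smul_mem _ (neg_mem hx), ?_⟩, ?_, ?_⟩
  · rw [adjugate_smul_one_add, ← hc, sub_eq_add_neg, smul_add, smul_smul, ← map_mul,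
      algebraMap_smul K (↑d⁻¹ : A) (-x), Units.val_mul]
  · rw [mul_smul_comm, mul_adjugate, smul_smul, hdd, one_smul]
  · rw [smul_mul_assoc, adjugate_mul, smul_smul, hdd, one_smul]

variable (K) in
/-- Reading `a` off as the unit `M₀₀ ≡ a (mod 𝔪)` makes `θ` choice-free; `theta_smul_one_add`
is its well-definedness. -/
def theta {G : Type*} (ϖ k : A) (ψ : K → G) (M : Matrix (Fin 2) (Fin 2) K) : G :=
  ψ ((M 0 0)⁻¹ * traceForm K ϖ k M)

section Uniformizer

variable {ϖ : A} (hϖ : Ideal.span {ϖ} = maximalIdeal A) (k : A)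
include hϖ

theorem traceForm_mem_one {x : Matrix (Fin 2) (Fin 2) K} (hx : x ∈ iwahoriRadical A K) :
    traceForm K ϖ k x ∈ (1 : Submodule A K) :=
  add_mem (inv_mul_mem_one_of_span_singleton_eq hϖ hx.2.2.1)
    (by simpa using Submodule.mul_mem_mul (Submodule.algebraMap_mem k) hx.2.1)

theorem traceForm_mul_mem {x y : Matrix (Fin 2) (Fin 2) K} (hx : x ∈ iwahoriRadical A K)
    (hy : y ∈ iwahoriRadical A K) : traceForm K ϖ k (x * y) ∈ 𝔪K := by
  obtain ⟨hx00, hx01, hx10, hx11⟩ := hx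
  obtain ⟨hy00, hy01, hy10, hy11⟩ := hy
  have hxy : traceForm K ϖ k (x * y) =
      (algebraMap A K ϖ)⁻¹ * x 1 0 * y 0 0 + x 1 1 * ((algebraMap A K ϖ)⁻¹ * y 1 0) +
        algebraMap A K k * (x 0 0 * y 0 1 + x 0 1 * y 1 1) := by
    simp only [traceForm_apply, mul_apply, Fin.sum_univ_two]
    ring
  rw [hxy]
  exact add_mem (add_mem
    (mul_mem_coeSubmodule_of_mem_one_left (inv_mul_mem_one_of_span_singleton_eq hϖ hx10) hy00)
    (mul_mem_coeSubmodule_of_mem_one_right hx11 (inv_mul_mem_one_of_span_singleton_eq hϖ hy10)))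
    (mul_mem_coeSubmodule_of_mem_one_left (Submodule.algebraMap_mem k)
      (add_mem (mul_mem_coeSubmodule_of_mem_one_right hx00 hy01)
        (mul_mem_coeSubmodule_of_mem_one_left hx01 hy11)))

variable {G : Type*} [Monoid G] {ψ : K → G} (hψadd : ∀ x y : K, ψ (x + y) = ψ x * ψ y)
  (hψm : ∀ r ∈ maximalIdeal A, ψ (algebraMap A K r) = 1)
include hψadd hψm

theorem theta_smul_one_add (a : Aˣ) {x : Matrix (Fin 2) (Fin 2) K} (hx : x ∈ iwahoriRadical A K) :
    theta K ϖ k ψ (algebraMap A K a • 1 + x) = ψ ((algebraMap A K a)⁻¹ * traceForm K ϖ k x) := by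
  simp only [theta, map_add, traceForm_smul_one, zero_add, Matrix.add_apply, Matrix.smul_apply,
    one_apply_eq, smul_eq_mul, mul_one]
  apply eq_of_sub_mem_coeSubmodule hψadd hψm
  rw [← sub_mul]
  exact mul_mem_coeSubmodule_of_mem_one_right (inv_add_sub_inv_mem a hx.1)
    (traceForm_mem_one hϖ k hx)

theorem theta_mul {M N : Matrix (Fin 2) (Fin 2) K} (hM : M ∈ unitsMulPrincipalUnits A K)
    (hN : N ∈ unitsMulPrincipalUnits A K) :
    theta K ϖ k ψ (M * N) = theta K ϖ k ψ M * theta K ϖ k ψ N := by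
  obtain ⟨a, x, hx, rfl⟩ := hM
  obtain ⟨b, y, hy, rfl⟩ := hN
  rw [algebraMap_smul_one_add_mul, theta_smul_one_add hϖ k hψadd hψm a hx,
    theta_smul_one_add hϖ k hψadd hψm b hy,
    theta_smul_one_add hϖ k hψadd hψm (a * b) (smul_add_smul_add_mul_mem (a : A) (b : A) hx hy),
    ← hψadd]
  apply eq_of_sub_mem_coeSubmodule hψadd hψm
  have hne (w : Aˣ) : algebraMap A K w ≠ 0 := (w.isUnit.map (algebraMap A K)).ne_zero
  have hsplit :
      (algebraMap A K ↑(a * b))⁻¹ * traceForm K ϖ k ((a : A) • y + (b : A) • x + x * y) -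
        ((algebraMap A K a)⁻¹ * traceForm K ϖ k x + (algebraMap A K b)⁻¹ * traceForm K ϖ k y) =
      (algebraMap A K ↑(a * b))⁻¹ * traceForm K ϖ k (x * y) := by
    simp only [map_add, ← algebraMap_smul K (a : A), ← algebraMap_smul K (b : A), map_smul,
      smul_eq_mul, Units.val_mul, map_mul]
    field_simp [hne a, hne b]
    ring
  rw [hsplit, ← map_units_inv]
  exact mul_mem_coeSubmodule_of_mem_one_left (Submodule.algebraMap_mem _)
    (traceForm_mul_mem hϖ k hx hy)

end Uniformizer

end Field

omit [IsFractionRing R F] in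
theorem smallPart_iff_mem_iwahoriRadical {x : Matrix (Fin 2) (Fin 2) F} :
    SmallPart R F x ↔ x ∈ iwahoriRadical R F := by
  simp only [SmallPart, mem_iwahoriRadical, mem_coeSubmodule, Submodule.mem_one, eq_comm]

omit [IsFractionRing R F] in
theorem sgrp_eq_unitsMulPrincipalUnits : Sgrp R F = unitsMulPrincipalUnits R F := by
  ext M
  simp only [Sgrp, smallPart_iff_mem_iwahoriRadical]
  rfl

end Iwahori

open Iwahori

/-- (i) `S` is a subgroup of `GL₂(F)`; (ii) the formula
`θ₁(a·1 + x) = ψ(a⁻¹·(ϖ⁻¹·x₂₁ + x₁₂))` is well defined and gives a group homomorphism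
`θ₁ : S → ℂˣ`; (iii) likewise `θ₂(a·1 + x) = ψ(a⁻¹·ϖ⁻¹·x₂₁)` gives a well-defined group
homomorphism `θ₂ : S → ℂˣ`. -/
theorem theta_one_two_well_defined_hom
    (ϖ : R) (hϖ : Ideal.span {ϖ} = maximalIdeal R)
    (ψ : F → ℂˣ) (hψadd : ∀ x y : F, ψ (x + y) = ψ x * ψ y)
    (hψm : ∀ r : R, r ∈ maximalIdeal R → ψ (algebraMap R F r) = 1) :
    -- (i) `S` is a subgroup of `GL₂(F)`
    ((1 : Matrix (Fin 2) (Fin 2) F) ∈ Sgrp R F ∧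
      (∀ M ∈ Sgrp R F, ∀ N ∈ Sgrp R F, M * N ∈ Sgrp R F) ∧
      (∀ M ∈ Sgrp R F, ∃ Minv ∈ Sgrp R F, M * Minv = 1 ∧ Minv * M = 1)) ∧
    -- (ii) `θ₁` is well defined and a homomorphism
    (∃ θ₁ : Matrix (Fin 2) (Fin 2) F → ℂˣ,
      (∀ (a : Rˣ) (x : Matrix (Fin 2) (Fin 2) F), SmallPart R F x →
        θ₁ (algebraMap R F (a : R) • (1 : Matrix (Fin 2) (Fin 2) F) + x) =
          ψ (algebraMap R F ((a⁻¹ : Rˣ) : R) *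
            ((algebraMap R F ϖ)⁻¹ * x 1 0 + x 0 1))) ∧
      (∀ M ∈ Sgrp R F, ∀ N ∈ Sgrp R F, θ₁ (M * N) = θ₁ M * θ₁ N)) ∧
    -- (iii) `θ₂` is well defined and a homomorphism
    (∃ θ₂ : Matrix (Fin 2) (Fin 2) F → ℂˣ,
      (∀ (a : Rˣ) (x : Matrix (Fin 2) (Fin 2) F), SmallPart R F x →
        θ₂ (algebraMap R F (a : R) • (1 : Matrix (Fin 2) (Fin 2) F) + x) =
          ψ (algebraMap R F ((a⁻¹ : Rˣ) : R) * ((algebraMap R F ϖ)⁻¹ * x 1 0))) ∧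
      (∀ M ∈ Sgrp R F, ∀ N ∈ Sgrp R F, θ₂ (M * N) = θ₂ M * θ₂ N)) := by
  simp only [sgrp_eq_unitsMulPrincipalUnits, smallPart_iff_mem_iwahoriRadical]
  have hθ (k : R) (a : Rˣ) {x : Matrix (Fin 2) (Fin 2) F} (hx : x ∈ iwahoriRadical R F) :
      theta F ϖ k ψ (algebraMap R F a • 1 + x) =
        ψ (algebraMap R F ↑a⁻¹ * ((algebraMap R F ϖ)⁻¹ * x 1 0 + algebraMap R F k * x 0 1)) := by
    rw [theta_smul_one_add hϖ k hψadd hψm a hx, map_units_inv, traceForm_apply]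
  refine ⟨⟨one_mem _, fun M hM N hN => mul_mem hM hN, fun M hM => exists_mul_eq_one hM⟩,
    ⟨theta F ϖ 1 ψ, fun a x hx => ?_, fun M hM N hN => theta_mul hϖ 1 hψadd hψm hM hN⟩,
    ⟨theta F ϖ 0 ψ, fun a x hx => ?_, fun M hM N hN => theta_mul hϖ 0 hψadd hψm hM hN⟩⟩
  · rw [hθ 1 a hx, map_one, one_mul]
  · rw [hθ 0 a hx, map_zero, zero_mul, add_zero]
end
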